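/- arXiv:1703.04554 — 8 statements merged into one kernel-verified Lean document; each statement's English description precedes it below -/
import Mathlib

section
/- Let P' ∈ ℝ^{u×v} be another nonnegative matrix with P_{ij} ≤ P'_{ij} for all i, j. Then the basic reproduction number is nondecreasing in the infected residence-time matrix: ρ(G(M,P,B)) ≤ ρ(G(M,P',B)). -/
open Matrix

/-- Spectral radius of a real matrix: the largest modulus of a complex eigenvalue. -/
noncomputable def specRad {n : Type*} [Fintype n] [DecidableEq n] (A : Matrix n n ℝ) : ℝ :=
  sSup ((fun z : ℂ => ‖z‖) '' spectrum ℂ (A.map (fun x : ℝ => (x : ℂ))))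

/-- Next generation matrix
`G(M,P,B) = diag(S*)·M·diag(B)·diag(MᵀS*)⁻¹·Pᵀ·diag(ν)·diag((μ+ν)∘(μ+γ+δ))⁻¹`. -/
noncomputable def NGM {u v : ℕ} (Sstar ν μ γ δ : Fin u → ℝ) (B : Fin v → ℝ)
    (M P : Matrix (Fin u) (Fin v) ℝ) : Matrix (Fin u) (Fin u) ℝ :=
  Matrix.diagonal Sstar * M * Matrix.diagonal B *
    Matrix.diagonal (fun j => ((Mᵀ *ᵥ Sstar) j)⁻¹) * Pᵀ *
    Matrix.diagonal ν *
    Matrix.diagonal (fun i => ((μ i + ν i) * (μ i + γ i + δ i))⁻¹)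

open scoped ENNReal

/-!
By Gelfand's formula `ρ(A) = lim ‖Aᵏ‖^(1/k)`, computed with the `ℓ∞` operator norm, the spectral
radius is monotone on entrywise nonnegative matrices: `0 ≤ A ≤ A'` entrywise gives
`0 ≤ Aᵏ ≤ A'ᵏ` entrywise, hence `‖Aᵏ‖ ≤ ‖A'ᵏ‖`. The next generation matrix is a product of
nonnegative factors in which `P` occurs once, so it is nonnegative and entrywise monotone in `P`.
-/

theorem spectralRadius_ne_top {𝕜 A : Type*} [NormedField 𝕜] [NormedRing A] [NormedAlgebra 𝕜 A]
    [CompleteSpace A] (a : A) : spectralRadius 𝕜 a ≠ ∞ :=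
  ne_top_of_le_ne_top (ENNReal.coe_ne_top (r := ‖a‖₊ * ‖(1 : A)‖₊)) <| iSup₂_le fun _ hk =>
    ENNReal.coe_le_coe.2 <| mod_cast spectrum.norm_le_norm_mul_of_mem hk

namespace Matrix

theorem diagonal_apply_nonneg {n R : Type*} [DecidableEq n] [Zero R] [Preorder R] {d : n → R}
    (hd : ∀ i, 0 ≤ d i) (i j : n) : 0 ≤ diagonal d i j := by
  rw [diagonal_apply]
  split_ifs
  exacts [hd i, le_rfl]

section EntrywiseOrder

variable {l m n R : Type*} [Fintype m] [Semiring R] [PartialOrder R] [IsOrderedRing R]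

theorem mulVec_apply_nonneg {A : Matrix l m R} {x : m → R} (hA : ∀ i j, 0 ≤ A i j)
    (hx : ∀ j, 0 ≤ x j) (i : l) : 0 ≤ (A *ᵥ x) i :=
  Finset.sum_nonneg fun j _ => mul_nonneg (hA i j) (hx j)

theorem mul_apply_nonneg {A : Matrix l m R} {B : Matrix m n R} (hA : ∀ i j, 0 ≤ A i j)
    (hB : ∀ i j, 0 ≤ B i j) (i : l) (j : n) : 0 ≤ (A * B) i j :=
  Finset.sum_nonneg fun k _ => mul_nonneg (hA i k) (hB k j)

theorem mul_apply_le_mul_apply {A A' : Matrix l m R} {B B' : Matrix m n R}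
    (hA : ∀ i j, 0 ≤ A i j) (hB : ∀ i j, 0 ≤ B i j) (hAA' : ∀ i j, A i j ≤ A' i j)
    (hBB' : ∀ i j, B i j ≤ B' i j) (i : l) (j : n) : (A * B) i j ≤ (A' * B') i j :=
  Finset.sum_le_sum fun k _ =>
    mul_le_mul (hAA' i k) (hBB' k j) (hB k j) ((hA i k).trans (hAA' i k))

theorem pow_apply_le_pow_apply [DecidableEq m] {A A' : Matrix m m R} (hA : ∀ i j, 0 ≤ A i j)
    (hAA' : ∀ i j, A i j ≤ A' i j) (k : ℕ) (i j : m) : (A ^ k) i j ≤ (A' ^ k) i j := by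
  induction k generalizing i j with
  | zero => exact le_rfl
  | succ k ih =>
    rw [pow_succ, pow_succ]
    exact mul_apply_le_mul_apply (pow_apply_nonneg hA k) hA ih hAA' i j

end EntrywiseOrder

end Matrix

theorem specRad_eq_toReal_spectralRadius {n : Type*} [Fintype n] [DecidableEq n]
    (A : Matrix n n ℝ) : specRad A = (spectralRadius ℂ (A.map ((↑) : ℝ → ℂ))).toReal := by
  rw [specRad, spectralRadius, ← sSup_image,
    ENNReal.toReal_sSup _ (by rintro _ ⟨z, -, rfl⟩; exact ENNReal.coe_ne_top), Set.image_image]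
  simp

section LinftyOp

attribute [local instance] Matrix.linftyOpNormedRing Matrix.linftyOpNormedAlgebra

variable {n : Type*} [Fintype n] [DecidableEq n]

theorem Matrix.linfty_opNNNorm_map_ofReal_le {A A' : Matrix n n ℝ} (hA : ∀ i j, 0 ≤ A i j)
    (hAA' : ∀ i j, A i j ≤ A' i j) :
    ‖A.map ((↑) : ℝ → ℂ)‖₊ ≤ ‖A'.map ((↑) : ℝ → ℂ)‖₊ := by
  simp only [linfty_opNNNorm_def, map_apply, Complex.nnnorm_real]
  gcongr with i _ j _
  rw [← NNReal.coe_le_coe, coe_nnnorm, coe_nnnorm, Real.norm_of_nonneg (hA i j),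
    Real.norm_of_nonneg ((hA i j).trans (hAA' i j))]
  exact hAA' i j

theorem spectralRadius_map_ofReal_le {A A' : Matrix n n ℝ} (hA : ∀ i j, 0 ≤ A i j)
    (hAA' : ∀ i j, A i j ≤ A' i j) :
    spectralRadius ℂ (A.map ((↑) : ℝ → ℂ)) ≤ spectralRadius ℂ (A'.map ((↑) : ℝ → ℂ)) := by
  refine le_of_tendsto_of_tendsto'
    (spectrum.pow_nnnorm_pow_one_div_tendsto_nhds_spectralRadius _)
    (spectrum.pow_nnnorm_pow_one_div_tendsto_nhds_spectralRadius _) fun k => ?_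
  have hpow (X : Matrix n n ℝ) : X.map ((↑) : ℝ → ℂ) ^ k = (X ^ k).map (↑) :=
    (map_pow Complex.ofRealHom.mapMatrix X k).symm
  rw [hpow, hpow]
  gcongr
  exact linfty_opNNNorm_map_ofReal_le (pow_apply_nonneg hA k) (pow_apply_le_pow_apply hA hAA' k)

theorem specRad_le_specRad {A A' : Matrix n n ℝ} (hA : ∀ i j, 0 ≤ A i j)
    (hAA' : ∀ i j, A i j ≤ A' i j) : specRad A ≤ specRad A' := by
  rw [specRad_eq_toReal_spectralRadius, specRad_eq_toReal_spectralRadius]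
  exact ENNReal.toReal_mono (spectralRadius_ne_top _) (spectralRadius_map_ofReal_le hA hAA')

end LinftyOp

section NGM

variable {u v : ℕ} {Sstar ν μ γ δ : Fin u → ℝ} {B : Fin v → ℝ} {M P P' : Matrix (Fin u) (Fin v) ℝ}

theorem NGM_apply_le_NGM_apply (hS : ∀ i, 0 ≤ Sstar i) (hν : ∀ i, 0 ≤ ν i)
    (hrate : ∀ i, 0 ≤ (μ i + ν i) * (μ i + γ i + δ i)) (hB : ∀ j, 0 ≤ B j)
    (hM : ∀ i j, 0 ≤ M i j) (hP : ∀ i j, 0 ≤ P i j) (hPP' : ∀ i j, P i j ≤ P' i j)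
    (i j : Fin u) : NGM Sstar ν μ γ δ B M P i j ≤ NGM Sstar ν μ γ δ B M P' i j := by
  have hinv (j : Fin v) : 0 ≤ ((Mᵀ *ᵥ Sstar) j)⁻¹ :=
    inv_nonneg.2 (mulVec_apply_nonneg (fun i j => hM j i) hS j)
  have hC := mul_apply_nonneg (mul_apply_nonneg (mul_apply_nonneg (diagonal_apply_nonneg hS) hM)
    (diagonal_apply_nonneg hB)) (diagonal_apply_nonneg hinv)
  have hPt : ∀ i j, 0 ≤ Pᵀ i j := fun i j => hP j i
  have hCP := mul_apply_nonneg hC hPt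
  have hν' := diagonal_apply_nonneg hν
  have hle₁ := mul_apply_le_mul_apply hC hPt (fun _ _ => le_rfl) fun i j => hPP' j i
  have hle₂ := mul_apply_le_mul_apply hCP hν' hle₁ fun _ _ => le_rfl
  exact mul_apply_le_mul_apply (mul_apply_nonneg hCP hν')
    (diagonal_apply_nonneg fun i => inv_nonneg.2 (hrate i)) hle₂ (fun _ _ => le_rfl) i j

/-- `G(M, P, B)` is linear in `P`, so its nonnegativity is monotonicity from `P = 0`. -/
theorem NGM_apply_nonneg (hS : ∀ i, 0 ≤ Sstar i) (hν : ∀ i, 0 ≤ ν i)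
    (hrate : ∀ i, 0 ≤ (μ i + ν i) * (μ i + γ i + δ i)) (hB : ∀ j, 0 ≤ B j)
    (hM : ∀ i j, 0 ≤ M i j) (hP : ∀ i j, 0 ≤ P i j) (i j : Fin u) :
    0 ≤ NGM Sstar ν μ γ δ B M P i j := by
  simpa [NGM] using
    NGM_apply_le_NGM_apply (P := 0) hS hν hrate hB hM (fun _ _ => le_rfl) hP i j

end NGM

theorem stmt0_general (u v : ℕ)
    (Λ μ ν γ δ : Fin u → ℝ)
    (hΛ : ∀ i, 0 < Λ i) (hμ : ∀ i, 0 < μ i) (hν : ∀ i, 0 < ν i) (hγ : ∀ i, 0 < γ i)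
    (hδ : ∀ i, 0 ≤ δ i)
    (B : Fin v → ℝ) (hB : ∀ j, 0 ≤ B j)
    (M P : Matrix (Fin u) (Fin v) ℝ)
    (hM : ∀ i j, 0 ≤ M i j) (hP : ∀ i j, 0 ≤ P i j)
    (Sstar : Fin u → ℝ) (hSstar : ∀ i, Sstar i = Λ i / μ i)
    (P' : Matrix (Fin u) (Fin v) ℝ)
    (hPP' : ∀ i j, P i j ≤ P' i j) :
    specRad (NGM Sstar ν μ γ δ B M P) ≤ specRad (NGM Sstar ν μ γ δ B M P') := by
  have hS : ∀ i, 0 ≤ Sstar i := fun i => by rw [hSstar]; exact div_nonneg (hΛ i).le (hμ i).le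
  have hrate : ∀ i, 0 ≤ (μ i + ν i) * (μ i + γ i + δ i) := fun i =>
    mul_nonneg (by linarith [hμ i, hν i]) (by linarith [hμ i, hγ i, hδ i])
  exact specRad_le_specRad (NGM_apply_nonneg hS (fun i => (hν i).le) hrate hB hM hP)
    (NGM_apply_le_NGM_apply hS (fun i => (hν i).le) hrate hB hM hP hPP')

/-- the basic reproduction number is nondecreasing in the infected
residence-time matrix `P`. -/
theorem stmt0 (u v : ℕ) (hu : 1 ≤ u) (hv : 1 ≤ v)
    (Λ μ ν γ δ η : Fin u → ℝ)
    (hΛ : ∀ i, 0 < Λ i) (hμ : ∀ i, 0 < μ i) (hν : ∀ i, 0 < ν i) (hγ : ∀ i, 0 < γ i)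
    (hδ : ∀ i, 0 ≤ δ i) (hη : ∀ i, 0 ≤ η i)
    (B : Fin v → ℝ) (hB : ∀ j, 0 ≤ B j)
    (M P : Matrix (Fin u) (Fin v) ℝ)
    (hM : ∀ i j, 0 ≤ M i j) (hP : ∀ i j, 0 ≤ P i j)
    (Sstar : Fin u → ℝ) (hSstar : ∀ i, Sstar i = Λ i / μ i)
    (hMS : ∀ j, 0 < (Mᵀ *ᵥ Sstar) j)
    (P' : Matrix (Fin u) (Fin v) ℝ) (hP' : ∀ i j, 0 ≤ P' i j)
    (hPP' : ∀ i j, P i j ≤ P' i j) :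
    specRad (NGM Sstar ν μ γ δ B M P) ≤ specRad (NGM Sstar ν μ γ δ B M P') :=
  stmt0_general u v Λ μ ν γ δ hΛ hμ hν hγ hδ B hB M P hM hP Sstar hSstar P' hPP'
end

section
/- For every j with 1 ≤ j ≤ u, the j-th column sum of the next generation matrix satisfies Σ_{i=1}^{u} G(M,P,B)_{ij} = R0^j, where R0^j = (ν_j/((μ_j+ν_j)(μ_j+γ_j+δ_j))) · Σ_{k=1}^{v} β_k p_{jk}. -/
/-! The column sums of `diag(S*)·M` are the total patch populations `(MᵀS*)_k`, which the factor
`diag(MᵀS*)⁻¹` cancels, so column `j` of the next generation matrix sums to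
`Σ_k β_k p_{jk}` times the diagonal weight `ν_j / ((μ_j+ν_j)(μ_j+γ_j+δ_j))`. -/

open Matrix

namespace Matrix

variable {m n : Type*} [Fintype m] [DecidableEq m]

theorem one_vecMul_diagonal_mul {R : Type*} [Semiring R] (d : m → R) (A : Matrix m n R) :
    1 ᵥ* (diagonal d * A) = d ᵥ* A := by
  rw [← vecMul_vecMul]
  congr 1
  ext i
  rw [vecMul_diagonal, Pi.one_apply, one_mul]

theorem one_vecMul_diagonal_mul_diagonal_mul_diagonal_inv {K : Type*} [Field K] [Fintype n]
    [DecidableEq n] (S : m → K) (A : Matrix m n K) (b : n → K) (hA : ∀ k, (Aᵀ *ᵥ S) k ≠ 0) :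
    1 ᵥ* (diagonal S * A * diagonal b * diagonal (fun k => ((Aᵀ *ᵥ S) k)⁻¹)) = b := by
  ext k
  rw [Matrix.mul_assoc, Matrix.mul_assoc, one_vecMul_diagonal_mul, ← vecMul_vecMul,
    ← vecMul_vecMul, vecMul_diagonal, vecMul_diagonal, ← mulVec_transpose, mul_right_comm,
    mul_inv_cancel₀ (hA k), one_mul]

end Matrix

theorem one_vecMul_NGM {u v : ℕ} (Sstar ν μ γ δ : Fin u → ℝ) (B : Fin v → ℝ)
    (M P : Matrix (Fin u) (Fin v) ℝ) (hMS : ∀ k, (Mᵀ *ᵥ Sstar) k ≠ 0) (j : Fin u) :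
    (1 ᵥ* NGM Sstar ν μ γ δ B M P) j =
      (P *ᵥ B) j * ν j * ((μ j + ν j) * (μ j + γ j + δ j))⁻¹ := by
  rw [NGM, ← vecMul_vecMul, ← vecMul_vecMul, ← vecMul_vecMul,
    one_vecMul_diagonal_mul_diagonal_mul_diagonal_inv _ _ _ hMS, vecMul_transpose,
    vecMul_diagonal, vecMul_diagonal]

theorem stmt2_general (u v : ℕ)
    (μ ν γ δ : Fin u → ℝ)
    (B : Fin v → ℝ)
    (M P : Matrix (Fin u) (Fin v) ℝ)
    (Sstar : Fin u → ℝ)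
    (hMS : ∀ j, 0 < (Mᵀ *ᵥ Sstar) j)
    :
    ∀ j, ∑ i : Fin u, NGM Sstar ν μ γ δ B M P i j =
      ν j / ((μ j + ν j) * (μ j + γ j + δ j)) * ∑ k : Fin v, B k * P j k := by
  intro j
  have hcol := one_vecMul_NGM Sstar ν μ γ δ B M P (fun k => (hMS k).ne') j
  simp only [vecMul, dotProduct, Pi.one_apply, one_mul] at hcol
  rw [hcol, mulVec, dotProduct, div_eq_mul_inv]
  simp only [mul_comm (P j _)]
  ring

/-- the `j`-th column sum of the next generation matrix equals
`R0^j = (ν_j/((μ_j+ν_j)(μ_j+γ_j+δ_j))) · Σ_k β_k p_{jk}`. -/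
theorem stmt2 (u v : ℕ) (hu : 1 ≤ u) (hv : 1 ≤ v)
    (Λ μ ν γ δ η : Fin u → ℝ)
    (hΛ : ∀ i, 0 < Λ i) (hμ : ∀ i, 0 < μ i) (hν : ∀ i, 0 < ν i) (hγ : ∀ i, 0 < γ i)
    (hδ : ∀ i, 0 ≤ δ i) (hη : ∀ i, 0 ≤ η i)
    (B : Fin v → ℝ) (hB : ∀ j, 0 ≤ B j)
    (M P : Matrix (Fin u) (Fin v) ℝ)
    (hM : ∀ i j, 0 ≤ M i j) (hP : ∀ i j, 0 ≤ P i j)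
    (Sstar : Fin u → ℝ) (hSstar : ∀ i, Sstar i = Λ i / μ i)
    (hMS : ∀ j, 0 < (Mᵀ *ᵥ Sstar) j)
    :
    ∀ j, ∑ i : Fin u, NGM Sstar ν μ γ δ B M P i j =
      ν j / ((μ j + ν j) * (μ j + γ j + δ j)) * ∑ k : Fin v, B k * P j k :=
  stmt2_general u v μ ν γ δ B M P Sstar hMS
end

section
/- Assume additionally that all entries of B are positive and that the u×u matrix M·Pᵀ is irreducible (i.e., for every pair (i,j) there exists an integer n ≥ 1 with ((MPᵀ)^n)_{ij} > 0). Then ρ(G(M,P,B)) ≥ min_{1≤i≤u} R0^i, where R0^i = (ν_i/((μ_i+ν_i)(μ_i+γ_i+δ_i))) · Σ_{k=1}^{v} β_k p_{ik}; moreover, for every group i and every patch j, R0^i ≥ ν_i β_j p_{ij}/((μ_i+ν_i)(μ_i+γ_i+δ_i)). In particular the u-group v-patch reproduction number dominates a single-group v-patch reproduction number, which dominates the corresponding single-group single-patch reproduction number. -/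
/-!
Every column of the next generation matrix `G` sums to the group reproduction number `R0^k`:
summing over the infected group turns `diag(S*) M` into `MᵀS*`, which cancels the
normalisation `diag(MᵀS*)⁻¹`. As `G` is nonnegative with all column sums at least
`r = min R0^k ≥ 0`, the column sums of `Gⁿ` are at least `rⁿ`, so the `ℓ∞` operator norm of `(Gᵀ)ⁿ` is
at least `rⁿ`, and Gelfand's formula gives `r ≤ ρ(Gᵀ) = ρ(G)`.
-/

open Matrix

lemma ofReal_le_spectralRadius_of_pow_le_norm_pow {A : Type*} [NormedRing A]
    [NormedAlgebra ℂ A] [CompleteSpace A] {a : A} {r : ℝ} (hr : 0 ≤ r)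
    (h : ∀ k : ℕ, r ^ k ≤ ‖a ^ k‖) : ENNReal.ofReal r ≤ spectralRadius ℂ a := by
  refine ge_of_tendsto (spectrum.pow_norm_pow_one_div_tendsto_nhds_spectralRadius a) ?_
  filter_upwards [Filter.eventually_ne_atTop 0] with k hk
  refine ENNReal.ofReal_le_ofReal ?_
  calc r = (r ^ k) ^ (1 / k : ℝ) := by rw [one_div, Real.pow_rpow_inv_natCast hr hk]
    _ ≤ ‖a ^ k‖ ^ (1 / k : ℝ) :=
      Real.rpow_le_rpow (pow_nonneg hr k) (h k) (by positivity)

namespace Matrix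

section LinftyOpNorm

attribute [local instance] Matrix.linftyOpSeminormedAddCommGroup

lemma sum_norm_apply_le_linfty_opNorm {m n α : Type*} [Fintype m] [Fintype n]
    [SeminormedAddCommGroup α] (A : Matrix m n α) (i : m) : ∑ j, ‖A i j‖ ≤ ‖A‖ := by
  rw [linfty_opNorm_def]
  simpa using NNReal.coe_le_coe.2 <|
    Finset.le_sup (f := fun i => ∑ j, ‖A i j‖₊) (Finset.mem_univ i)

end LinftyOpNorm

variable {n : Type*} [Fintype n] [DecidableEq n]

lemma le_sum_pow_apply_of_le_sum {R : Type*} [Semiring R] [PartialOrder R] [IsOrderedRing R]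
    {A : Matrix n n R} (hA : ∀ i j, 0 ≤ A i j) {r : R}
    (hr : 0 ≤ r) (hcol : ∀ j, r ≤ ∑ i, A i j) (k : ℕ) (j : n) :
    r ^ k ≤ ∑ i, (A ^ k) i j := by
  induction k with
  | zero => simp [one_apply]
  | succ k ih =>
    calc r ^ (k + 1) = r * r ^ k := pow_succ' r k
      _ ≤ r * ∑ l, (A ^ k) l j := mul_le_mul_of_nonneg_left ih hr
      _ = ∑ l, r * (A ^ k) l j := Finset.mul_sum ..
      _ ≤ ∑ l, (∑ i, A i l) * (A ^ k) l j :=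
        Finset.sum_le_sum fun l _ =>
          mul_le_mul_of_nonneg_right (hcol l) (pow_apply_nonneg hA k l j)
      _ = ∑ i, (A ^ (k + 1)) i j := by
        simp only [pow_succ', mul_apply, Finset.sum_mul]
        exact Finset.sum_comm

lemma spectrum_transpose {R : Type*} [CommRing R] (A : Matrix n n R) :
    spectrum R Aᵀ = spectrum R A := by
  ext z
  simp only [spectrum.mem_iff, Algebra.algebraMap_eq_smul_one, ← isUnit_transpose (z • 1 - A),
    transpose_sub, transpose_smul, transpose_one]

lemma specRad_nonneg (A : Matrix n n ℝ) : 0 ≤ specRad A :=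
  Real.sSup_nonneg <| Set.forall_mem_image.2 fun z _ => norm_nonneg z

lemma spectralRadius_map_ofReal_le_specRad (A : Matrix n n ℝ) :
    spectralRadius ℂ (A.map ((↑) : ℝ → ℂ)) ≤ ENNReal.ofReal (specRad A) := by
  refine iSup₂_le fun z hz => ?_
  rw [← ENNReal.ofReal_coe_nnreal, coe_nnnorm]
  refine ENNReal.ofReal_le_ofReal (le_csSup ?_ ⟨z, hz, rfl⟩)
  exact ((finite_spectrum _).image _).bddAbove

section LinftyOpNorm

attribute [local instance] Matrix.linftyOpNormedRing Matrix.linftyOpNormedAlgebra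

lemma le_specRad_of_le_sum_col [Nonempty n] {A : Matrix n n ℝ} (hA : ∀ i j, 0 ≤ A i j)
    {r : ℝ} (hcol : ∀ j, r ≤ ∑ i, A i j) : r ≤ specRad A := by
  rcases le_or_gt r 0 with hr | hr
  · exact hr.trans (specRad_nonneg A)
  obtain ⟨j⟩ := ‹Nonempty n›
  set a : Matrix n n ℂ := (A.map ((↑) : ℝ → ℂ))ᵀ
  have hnorm (k : ℕ) : r ^ k ≤ ‖a ^ k‖ :=
    calc r ^ k ≤ ∑ i, (A ^ k) i j := le_sum_pow_apply_of_le_sum hA hr.le hcol k j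
      _ = ∑ i, ‖(a ^ k) j i‖ := by
        refine Finset.sum_congr rfl fun i _ => ?_
        have hpow : a ^ k = ((A ^ k).map Complex.ofRealHom)ᵀ := by
          rw [Matrix.map_pow, transpose_pow]; rfl
        rw [hpow]
        simp [abs_of_nonneg (pow_apply_nonneg hA k i j)]
      _ ≤ ‖a ^ k‖ := sum_norm_apply_le_linfty_opNorm _ j
  have hrad : ENNReal.ofReal r ≤ spectralRadius ℂ (A.map ((↑) : ℝ → ℂ)) := by
    simpa [a, spectralRadius, spectrum_transpose] using
      ofReal_le_spectralRadius_of_pow_le_norm_pow hr.le hnorm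
  exact (ENNReal.ofReal_le_ofReal_iff (specRad_nonneg A)).1
    (hrad.trans (spectralRadius_map_ofReal_le_specRad A))

end LinftyOpNorm

end Matrix

section NextGenerationMatrix

variable {u v : ℕ} {Sstar ν μ γ δ : Fin u → ℝ} {B : Fin v → ℝ} {M P : Matrix (Fin u) (Fin v) ℝ}

lemma NGM_apply (i k : Fin u) :
    NGM Sstar ν μ γ δ B M P i k =
      ∑ j, Sstar i * M i j * (B j * P k j / (Mᵀ *ᵥ Sstar) j) *
        (ν k / ((μ k + ν k) * (μ k + γ k + δ k))) := by
  rw [NGM, mul_diagonal, mul_diagonal, mul_apply]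
  simp only [mul_diagonal, diagonal_mul, transpose_apply, Finset.sum_mul]
  exact Finset.sum_congr rfl fun j _ => by ring

lemma NGM_nonneg (hS : ∀ i, 0 ≤ Sstar i) (hν : ∀ i, 0 ≤ ν i)
    (hD : ∀ i, 0 ≤ (μ i + ν i) * (μ i + γ i + δ i)) (hB : ∀ j, 0 ≤ B j)
    (hM : ∀ i j, 0 ≤ M i j) (hP : ∀ i j, 0 ≤ P i j) (hMS : ∀ j, 0 ≤ (Mᵀ *ᵥ Sstar) j)
    (i k : Fin u) : 0 ≤ NGM Sstar ν μ γ δ B M P i k := by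
  rw [NGM_apply]
  exact Finset.sum_nonneg fun j _ =>
    mul_nonneg (mul_nonneg (mul_nonneg (hS i) (hM i j))
      (div_nonneg (mul_nonneg (hB j) (hP k j)) (hMS j))) (div_nonneg (hν k) (hD k))

lemma sum_NGM_apply (hMS : ∀ j, (Mᵀ *ᵥ Sstar) j ≠ 0) (k : Fin u) :
    ∑ i, NGM Sstar ν μ γ δ B M P i k =
      ν k / ((μ k + ν k) * (μ k + γ k + δ k)) * ∑ j, B j * P k j := by
  simp only [NGM_apply]
  rw [Finset.sum_comm, Finset.mul_sum]
  refine Finset.sum_congr rfl fun j _ => ?_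
  have hcol : ∑ i, Sstar i * M i j = (Mᵀ *ᵥ Sstar) j := by
    simp [mulVec, dotProduct, mul_comm]
  rw [← Finset.sum_mul, ← Finset.sum_mul, hcol, mul_div_cancel₀ _ (hMS j)]
  ring

end NextGenerationMatrix

theorem stmt5_general (u v : ℕ) (hu : 1 ≤ u)
    (Λ μ ν γ δ : Fin u → ℝ)
    (hΛ : ∀ i, 0 < Λ i) (hμ : ∀ i, 0 < μ i) (hν : ∀ i, 0 < ν i) (hγ : ∀ i, 0 < γ i)
    (hδ : ∀ i, 0 ≤ δ i)
    (B : Fin v → ℝ) (hB : ∀ j, 0 ≤ B j)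
    (M P : Matrix (Fin u) (Fin v) ℝ)
    (hM : ∀ i j, 0 ≤ M i j) (hP : ∀ i j, 0 ≤ P i j)
    (Sstar : Fin u → ℝ) (hSstar : ∀ i, Sstar i = Λ i / μ i)
    (hMS : ∀ j, 0 < (Mᵀ *ᵥ Sstar) j) :
    (⨅ i : Fin u, ν i / ((μ i + ν i) * (μ i + γ i + δ i)) * ∑ k : Fin v, B k * P i k) ≤
        specRad (NGM Sstar ν μ γ δ B M P) ∧
      ∀ i : Fin u, ∀ j : Fin v,
        ν i * B j * P i j / ((μ i + ν i) * (μ i + γ i + δ i)) ≤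
          ν i / ((μ i + ν i) * (μ i + γ i + δ i)) * ∑ k : Fin v, B k * P i k := by
  have : Nonempty (Fin u) := ⟨⟨0, hu⟩⟩
  have hS i : 0 ≤ Sstar i := hSstar i ▸ div_nonneg (hΛ i).le (hμ i).le
  have hD i : 0 ≤ (μ i + ν i) * (μ i + γ i + δ i) := by
    nlinarith [hμ i, hν i, hγ i, hδ i]
  have hR0 i : 0 ≤ ν i / ((μ i + ν i) * (μ i + γ i + δ i)) := div_nonneg (hν i).le (hD i)
  have hG := NGM_nonneg hS (fun i => (hν i).le) hD hB hM hP fun j => (hMS j).le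
  refine ⟨le_specRad_of_le_sum_col hG fun k => ?_, fun i j => ?_⟩
  · rw [sum_NGM_apply fun j => (hMS j).ne']
    exact ciInf_le (Finite.bddBelow_range _) k
  · rw [mul_assoc, mul_div_right_comm]
    exact mul_le_mul_of_nonneg_left
      (Finset.single_le_sum (fun k _ => mul_nonneg (hB k) (hP i k)) (Finset.mem_univ j)) (hR0 i)

/-- the basic reproduction number dominates the minimal group
reproduction number `R0^i`, and each `R0^i` dominates every single-patch
quantity `ν_i β_j p_{ij}/((μ_i+ν_i)(μ_i+γ_i+δ_i))`. -/
theorem stmt5 (u v : ℕ) (hu : 1 ≤ u) (hv : 1 ≤ v)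
    (Λ μ ν γ δ η : Fin u → ℝ)
    (hΛ : ∀ i, 0 < Λ i) (hμ : ∀ i, 0 < μ i) (hν : ∀ i, 0 < ν i) (hγ : ∀ i, 0 < γ i)
    (hδ : ∀ i, 0 ≤ δ i) (hη : ∀ i, 0 ≤ η i)
    (B : Fin v → ℝ) (hB : ∀ j, 0 ≤ B j)
    (M P : Matrix (Fin u) (Fin v) ℝ)
    (hM : ∀ i j, 0 ≤ M i j) (hP : ∀ i j, 0 ≤ P i j)
    (Sstar : Fin u → ℝ) (hSstar : ∀ i, Sstar i = Λ i / μ i)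
    (hMS : ∀ j, 0 < (Mᵀ *ᵥ Sstar) j)
    (hBpos : ∀ j, 0 < B j)
    (hirr : ∀ i j : Fin u, ∃ n : ℕ, 1 ≤ n ∧ 0 < ((M * Pᵀ) ^ n) i j) :
    (⨅ i : Fin u, ν i / ((μ i + ν i) * (μ i + γ i + δ i)) * ∑ k : Fin v, B k * P i k) ≤
        specRad (NGM Sstar ν μ γ δ B M P) ∧
      ∀ i : Fin u, ∀ j : Fin v,
        ν i * B j * P i j / ((μ i + ν i) * (μ i + γ i + δ i)) ≤
          ν i / ((μ i + ν i) * (μ i + γ i + δ i)) * ∑ k : Fin v, B k * P i k :=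
  stmt5_general u v hu Λ μ ν γ δ hΛ hμ hν hγ hδ B hB M P hM hP Sstar hSstar hMS
end

section
/- Suppose the susceptible residence-time matrix has rank one in the form M = ξ·mᵀ, where ξ ∈ ℝ^u has positive entries and m ∈ ℝ^v has positive entries. Then the basic reproduction number is given explicitly by ρ(G(M,P,B)) = (ξᵀS*)⁻¹ · ⟨B, Pᵀ·diag(ν)·diag((μ+ν)∘(μ+γ+δ))⁻¹·diag(S*)·ξ⟩, where ⟨·,·⟩ is the Euclidean inner product on ℝ^v. -/
/-!
If `M = ξ mᵀ` then `diag(MᵀS*) = (ξ ⬝ S*) diag(m)`, the factors `m_j` cancel, and the next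
generation matrix collapses to a rank-one matrix `a rᵀ` with `a = S* ∘ ξ`. The characteristic
polynomial of `a rᵀ` is `X^(n-1) (X - r ⬝ a)`, so its spectral radius is `|r ⬝ a|`, and
nonnegativity of the data removes the absolute value.
-/

open Matrix

open Polynomial

section RankOne

variable {n K : Type*} [Fintype n] [DecidableEq n] [Field K]

theorem spectrum_vecMulVec_subset (u v : n → K) :
    spectrum K (vecMulVec u v) ⊆ {u ⬝ᵥ v, 0} := by
  intro z hz
  rw [mem_spectrum_iff_isRoot_charpoly, charpoly_vecMulVec] at hz
  cases isEmpty_or_nonempty n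
  · simp at hz
  · obtain ⟨k, hk⟩ := Nat.exists_eq_add_of_lt (Fintype.card_pos (α := n))
    rw [hk, zero_add, Nat.add_sub_cancel, IsRoot, eval_sub, eval_smul, eval_pow, eval_pow,
      eval_X, smul_eq_mul] at hz
    have hfactor : z ^ k * (z - u ⬝ᵥ v) = 0 := by rw [← hz]; ring
    rcases mul_eq_zero.mp hfactor with hzero | htrace
    · exact Or.inr (pow_eq_zero_iff'.mp hzero).1
    · exact Or.inl (sub_eq_zero.mp htrace)

theorem dotProduct_mem_spectrum_vecMulVec [Nonempty n] (u v : n → K) :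
    u ⬝ᵥ v ∈ spectrum K (vecMulVec u v) := by
  obtain ⟨k, hk⟩ := Nat.exists_eq_add_of_lt (Fintype.card_pos (α := n))
  rw [mem_spectrum_iff_isRoot_charpoly, charpoly_vecMulVec, hk, zero_add, Nat.add_sub_cancel,
    IsRoot, eval_sub, eval_smul, eval_pow, eval_pow, eval_X, smul_eq_mul, ← pow_succ', sub_self]

theorem specRad_vecMulVec (u v : n → ℝ) : specRad (vecMulVec u v) = |u ⬝ᵥ v| := by
  have hmap : (vecMulVec u v).map (fun x : ℝ => (x : ℂ)) =
      vecMulVec (fun i => (u i : ℂ)) (fun i => (v i : ℂ)) := by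
    ext i j
    simp [vecMulVec_apply]
  have hdot : (fun i => (u i : ℂ)) ⬝ᵥ (fun i => (v i : ℂ)) = ((u ⬝ᵥ v : ℝ) : ℂ) := by
    simp [dotProduct]
  rw [specRad, hmap]
  cases isEmpty_or_nonempty n
  · simp [dotProduct]
  · refine IsGreatest.csSup_eq ⟨⟨_, dotProduct_mem_spectrum_vecMulVec _ _, ?_⟩, ?_⟩
    · simp only [hdot, Complex.norm_real, Real.norm_eq_abs]
    · rintro _ ⟨z, hz, rfl⟩
      rcases spectrum_vecMulVec_subset _ _ hz with rfl | rfl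
      · simp only [hdot, Complex.norm_real, Real.norm_eq_abs, le_refl]
      · simp

end RankOne

theorem dotProduct_mul_mulVec {m n R : Type*} [Fintype m] [Fintype n] [CommSemiring R]
    (a w : m → R) (P : Matrix m n R) (b : n → R) :
    a ⬝ᵥ (w * P *ᵥ b) = b ⬝ᵥ (Pᵀ *ᵥ (w * a)) := by
  rw [dotProduct_mulVec, vecMul_transpose]
  simp only [dotProduct, Pi.mul_apply]
  exact Finset.sum_congr rfl fun i _ => by ring

theorem NGM_vecMulVec {u v : ℕ} (S ν μ γ δ ξ : Fin u → ℝ) (B m : Fin v → ℝ)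
    (P : Matrix (Fin u) (Fin v) ℝ) (hm : ∀ j, m j ≠ 0) :
    NGM S ν μ γ δ B (vecMulVec ξ m) P = vecMulVec (S * ξ)
      ((ξ ⬝ᵥ S)⁻¹ • ((fun k => ν k * ((μ k + ν k) * (μ k + γ k + δ k))⁻¹) * P *ᵥ B)) := by
  have hcol : (vecMulVec ξ m)ᵀ *ᵥ S = (ξ ⬝ᵥ S) • m := by
    rw [transpose_vecMulVec, vecMulVec_mulVec, dotProduct_comm, op_smul_eq_smul]
  rw [NGM, hcol, mul_vecMulVec, show diagonal S *ᵥ ξ = S * ξ from funext (mulVec_diagonal S ξ)]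
  simp only [vecMulVec_mul]
  congr 1
  set c := ξ ⬝ᵥ S
  ext k
  simp only [vecMul_diagonal, vecMul_transpose, mulVec, dotProduct, Pi.smul_apply, Pi.mul_apply,
    smul_eq_mul, Finset.mul_sum, Finset.sum_mul]
  refine Finset.sum_congr rfl fun j _ => ?_
  field_simp [hm j]

theorem stmt7_general (u v : ℕ)
    (Λ μ ν γ δ : Fin u → ℝ)
    (hΛ : ∀ i, 0 < Λ i) (hμ : ∀ i, 0 < μ i) (hν : ∀ i, 0 < ν i) (hγ : ∀ i, 0 < γ i)
    (hδ : ∀ i, 0 ≤ δ i)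
    (B : Fin v → ℝ) (hB : ∀ j, 0 ≤ B j)
    (M P : Matrix (Fin u) (Fin v) ℝ)
    (hP : ∀ i j, 0 ≤ P i j)
    (Sstar : Fin u → ℝ) (hSstar : ∀ i, Sstar i = Λ i / μ i)
    (ξ : Fin u → ℝ) (m : Fin v → ℝ) (hξ : ∀ i, 0 < ξ i) (hm : ∀ j, 0 < m j)
    (hMrank1 : M = Matrix.of fun i j => ξ i * m j) :
    specRad (NGM Sstar ν μ γ δ B M P) =
      (∑ i : Fin u, ξ i * Sstar i)⁻¹ *
        (B ⬝ᵥ (Pᵀ *ᵥ fun i => ν i * ((μ i + ν i) * (μ i + γ i + δ i))⁻¹ * (Sstar i * ξ i))) := by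
  have hS : ∀ i, 0 ≤ Sstar i := fun i => hSstar i ▸ div_nonneg (hΛ i).le (hμ i).le
  have hweight : ∀ i, 0 ≤ ν i * ((μ i + ν i) * (μ i + γ i + δ i))⁻¹ * (Sstar i * ξ i) :=
    fun i => mul_nonneg (mul_nonneg (hν i).le (inv_nonneg.2 (mul_nonneg
      (by linarith [hμ i, hν i]) (by linarith [hμ i, hγ i, hδ i])))) (mul_nonneg (hS i) (hξ i).le)
  rw [show M = vecMulVec ξ m from hMrank1, NGM_vecMulVec _ _ _ _ _ _ _ _ _ fun j => (hm j).ne',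
    specRad_vecMulVec, dotProduct_smul, smul_eq_mul, dotProduct_mul_mulVec]
  exact abs_of_nonneg <| mul_nonneg
    (inv_nonneg.2 <| Finset.sum_nonneg fun i _ => mul_nonneg (hξ i).le (hS i))
    (dotProduct_nonneg_of_nonneg hB fun k => dotProduct_nonneg_of_nonneg (fun i => hP i k) hweight)

/-- explicit formula for the basic reproduction number when the
susceptible residence-time matrix is of rank one, `M = ξ·mᵀ` with `ξ, m > 0`:
`ρ(G) = (ξᵀS*)⁻¹ ⟨B, Pᵀ·diag(ν)·diag((μ+ν)∘(μ+γ+δ))⁻¹·diag(S*)·ξ⟩`. -/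
theorem stmt7 (u v : ℕ) (hu : 1 ≤ u) (hv : 1 ≤ v)
    (Λ μ ν γ δ η : Fin u → ℝ)
    (hΛ : ∀ i, 0 < Λ i) (hμ : ∀ i, 0 < μ i) (hν : ∀ i, 0 < ν i) (hγ : ∀ i, 0 < γ i)
    (hδ : ∀ i, 0 ≤ δ i) (hη : ∀ i, 0 ≤ η i)
    (B : Fin v → ℝ) (hB : ∀ j, 0 ≤ B j)
    (M P : Matrix (Fin u) (Fin v) ℝ)
    (hM : ∀ i j, 0 ≤ M i j) (hP : ∀ i j, 0 ≤ P i j)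
    (Sstar : Fin u → ℝ) (hSstar : ∀ i, Sstar i = Λ i / μ i)
    (hMS : ∀ j, 0 < (Mᵀ *ᵥ Sstar) j)
    (ξ : Fin u → ℝ) (m : Fin v → ℝ) (hξ : ∀ i, 0 < ξ i) (hm : ∀ j, 0 < m j)
    (hMrank1 : M = Matrix.of fun i j => ξ i * m j) :
    specRad (NGM Sstar ν μ γ δ B M P) =
      (∑ i : Fin u, ξ i * Sstar i)⁻¹ *
        (B ⬝ᵥ (Pᵀ *ᵥ fun i => ν i * ((μ i + ν i) * (μ i + γ i + δ i))⁻¹ * (Sstar i * ξ i))) :=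
  stmt7_general u v Λ μ ν γ δ hΛ hμ hν hγ hδ B hB M P hP Sstar hSstar ξ m hξ hm hMrank1
end

section
/- Suppose P = 𝟙·pᵀ where 𝟙 ∈ ℝ^u is the all-ones vector and p ∈ ℝ^v has nonnegative entries summing to 1 (so P is rank one and row-stochastic). Then ρ(G(M,P,B)) = ⟨S*, diag(ν)·diag((μ+ν)∘(μ+γ+δ))⁻¹·M·diag(MᵀS*)⁻¹·(B∘p)⟩. -/
open Matrix

/-!
If `P = 𝟙 pᵀ`, the next generation matrix is a rank-one matrix `x yᵀ`. Its characteristic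
polynomial is `X ^ n - (x ⬝ᵥ y) X ^ (n - 1)`, so its only possible nonzero eigenvalue is `x ⬝ᵥ y`
and its spectral radius is `|x ⬝ᵥ y|`. All factors being nonnegative, `x ⬝ᵥ y ≥ 0`, and
regrouping it gives the stated inner product.
-/

namespace Matrix

variable {n : Type*} [Fintype n] [DecidableEq n]

theorem mem_spectrum_vecMulVec_iff {K : Type*} [Field K] (x y : n → K) {r : K} (hr : r ≠ 0) :
    r ∈ spectrum K (vecMulVec x y) ↔ r = x ⬝ᵥ y := by
  rw [mem_spectrum_iff_isRoot_charpoly, charpoly_vecMulVec, Polynomial.IsRoot.def]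
  cases isEmpty_or_nonempty n
  · simp [hr]
  · obtain ⟨k, hk⟩ := Nat.exists_eq_add_one.mpr (Fintype.card_pos (α := n))
    rw [hk, Nat.add_sub_cancel]
    simp [pow_succ, sub_eq_zero, mul_comm _ (r ^ k), hr]

omit [Fintype n] [DecidableEq n] in
theorem map_ofReal_vecMulVec (x y : n → ℝ) :
    (vecMulVec x y).map ((↑) : ℝ → ℂ) = vecMulVec (fun i => (x i : ℂ)) (fun i => (y i : ℂ)) := by
  ext i j
  simp [vecMulVec_apply]

theorem specRad_vecMulVec (x y : n → ℝ) : specRad (vecMulVec x y) = |x ⬝ᵥ y| := by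
  have hdot : (fun i => (x i : ℂ)) ⬝ᵥ (fun i => (y i : ℂ)) = ((x ⬝ᵥ y : ℝ) : ℂ) := by
    simp [dotProduct]
  have hle : ∀ r ∈ (fun z : ℂ => ‖z‖) '' spectrum ℂ ((vecMulVec x y).map ((↑) : ℝ → ℂ)),
      r ≤ |x ⬝ᵥ y| := by
    rintro _ ⟨z, hz, rfl⟩
    rcases eq_or_ne z 0 with rfl | hz0
    · simp
    · rw [map_ofReal_vecMulVec, mem_spectrum_vecMulVec_iff _ _ hz0, hdot] at hz
      simp [hz]
  refine le_antisymm (Real.sSup_le hle (abs_nonneg _)) ?_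
  rcases eq_or_ne (x ⬝ᵥ y) 0 with h0 | h0
  · -- the spectrum is empty when `n` is, and `sSup ∅ = 0`
    rw [h0, abs_zero]
    exact Real.sSup_nonneg (by rintro _ ⟨z, -, rfl⟩; exact norm_nonneg z)
  · refine le_csSup ⟨_, hle⟩ ⟨((x ⬝ᵥ y : ℝ) : ℂ), ?_, by simp⟩
    rw [map_ofReal_vecMulVec, mem_spectrum_vecMulVec_iff _ _ (by exact_mod_cast h0), hdot]

end Matrix

theorem NGM_of_identical_rows {u v : ℕ} (Sstar ν μ γ δ : Fin u → ℝ) (B p : Fin v → ℝ)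
    (M : Matrix (Fin u) (Fin v) ℝ) :
    NGM Sstar ν μ γ δ B M (of fun _ j => p j) =
      vecMulVec (Sstar * (M *ᵥ fun j => ((Mᵀ *ᵥ Sstar) j)⁻¹ * (B j * p j)))
        (fun i => ν i * ((μ i + ν i) * (μ i + γ i + δ i))⁻¹) := by
  ext i k
  simp only [NGM, mul_apply, diagonal_apply, transpose_apply, of_apply, vecMulVec_apply,
    mulVec, dotProduct, Pi.mul_apply, ite_mul, mul_ite, zero_mul, mul_zero,
    Finset.sum_ite_eq, Finset.sum_ite_eq', Finset.mem_univ, if_true, Finset.mul_sum,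
    Finset.sum_mul]
  exact Finset.sum_congr rfl fun j _ => by ring

theorem stmt10_general (u v : ℕ)
    (Λ μ ν γ δ : Fin u → ℝ)
    (hΛ : ∀ i, 0 < Λ i) (hμ : ∀ i, 0 < μ i) (hν : ∀ i, 0 < ν i) (hγ : ∀ i, 0 < γ i)
    (hδ : ∀ i, 0 ≤ δ i)
    (B : Fin v → ℝ) (hB : ∀ j, 0 ≤ B j)
    (M P : Matrix (Fin u) (Fin v) ℝ)
    (hM : ∀ i j, 0 ≤ M i j)
    (Sstar : Fin u → ℝ) (hSstar : ∀ i, Sstar i = Λ i / μ i)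
    (hMS : ∀ j, 0 < (Mᵀ *ᵥ Sstar) j)
    (p : Fin v → ℝ) (hp : ∀ j, 0 ≤ p j)
    (hPrank1 : P = Matrix.of fun _ j => p j) :
    specRad (NGM Sstar ν μ γ δ B M P) =
      Sstar ⬝ᵥ
        (fun i => ν i * ((μ i + ν i) * (μ i + γ i + δ i))⁻¹ *
          (M *ᵥ fun j => ((Mᵀ *ᵥ Sstar) j)⁻¹ * (B j * p j)) i) := by
  set w : Fin v → ℝ := fun j => ((Mᵀ *ᵥ Sstar) j)⁻¹ * (B j * p j)
  set c : Fin u → ℝ := fun i => ν i * ((μ i + ν i) * (μ i + γ i + δ i))⁻¹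
  have hdot : (Sstar * (M *ᵥ w)) ⬝ᵥ c = Sstar ⬝ᵥ fun i => c i * (M *ᵥ w) i :=
    Finset.sum_congr rfl fun i _ => by simp only [Pi.mul_apply]; ring
  have hSstar_nonneg : 0 ≤ Sstar := fun i => hSstar i ▸ (div_pos (hΛ i) (hμ i)).le
  have hw : 0 ≤ w := fun j => mul_nonneg (inv_nonneg.2 (hMS j).le) (mul_nonneg (hB j) (hp j))
  have hMw : 0 ≤ M *ᵥ w := fun i => dotProduct_nonneg_of_nonneg (hM i) hw
  have hc : 0 ≤ c := fun i =>
    mul_nonneg (hν i).le (inv_nonneg.2 (mul_nonneg (by linarith [hμ i, hν i])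
      (by linarith [hμ i, hγ i, hδ i])))
  rw [hPrank1, NGM_of_identical_rows, Matrix.specRad_vecMulVec, hdot]
  exact abs_of_nonneg <|
    dotProduct_nonneg_of_nonneg hSstar_nonneg fun i => mul_nonneg (hc i) (hMw i)

/-- if `P = 𝟙·pᵀ` is rank one and row-stochastic, then
`ρ(G) = ⟨S*, diag(ν)·diag((μ+ν)∘(μ+γ+δ))⁻¹·M·diag(MᵀS*)⁻¹·(B∘p)⟩`. -/
theorem stmt10 (u v : ℕ) (hu : 1 ≤ u) (hv : 1 ≤ v)
    (Λ μ ν γ δ η : Fin u → ℝ)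
    (hΛ : ∀ i, 0 < Λ i) (hμ : ∀ i, 0 < μ i) (hν : ∀ i, 0 < ν i) (hγ : ∀ i, 0 < γ i)
    (hδ : ∀ i, 0 ≤ δ i) (hη : ∀ i, 0 ≤ η i)
    (B : Fin v → ℝ) (hB : ∀ j, 0 ≤ B j)
    (M P : Matrix (Fin u) (Fin v) ℝ)
    (hM : ∀ i j, 0 ≤ M i j) (hP : ∀ i j, 0 ≤ P i j)
    (Sstar : Fin u → ℝ) (hSstar : ∀ i, Sstar i = Λ i / μ i)
    (hMS : ∀ j, 0 < (Mᵀ *ᵥ Sstar) j)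
    (p : Fin v → ℝ) (hp : ∀ j, 0 ≤ p j) (hpsum : ∑ j : Fin v, p j = 1)
    (hPrank1 : P = Matrix.of fun _ j => p j) :
    specRad (NGM Sstar ν μ γ δ B M P) =
      Sstar ⬝ᵥ
        (fun i => ν i * ((μ i + ν i) * (μ i + γ i + δ i))⁻¹ *
          (M *ᵥ fun j => ((Mᵀ *ᵥ Sstar) j)⁻¹ * (B j * p j)) i) :=
  stmt10_general u v Λ μ ν γ δ hΛ hμ hν hγ hδ B hB M P hM Sstar hSstar hMS p hp hPrank1
end

section
/- Extend the patch system by one zero-risk patch: let B̃ ∈ ℝ^{v+1} have B̃_j = B_j for j ≤ v and B̃_{v+1} = 0, and let M̃, P̃ ∈ ℝ^{u×(v+1)} be obtained from M, P by appending arbitrary nonnegative columns m', p', assuming (M̃ᵀS*)_j > 0 for every j ≤ v+1. Then the basic reproduction number is unchanged: ρ(G(M̃,P̃,B̃)) = ρ(G(M,P,B)). -/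
open Matrix

/-! The new patch enters `G` only through the terms carrying its risk `B̃_{v+1} = 0`, and the
old entries of `M̃ᵀS*` coincide with those of `MᵀS*`; hence the next generation matrix itself,
not just its spectral radius, is unchanged. -/

section SnocColumn

variable {l k R : Type*} [CommSemiring R] {n : ℕ}

theorem transpose_snoc_mulVec_castSucc [Fintype l] (A : Matrix l (Fin n) R) (a x : l → R)
    (j : Fin n) :
    ((of fun i => Fin.snoc (A i) (a i))ᵀ *ᵥ x) j.castSucc = (Aᵀ *ᵥ x) j := by
  simp only [mulVec, dotProduct, transpose_apply, of_apply, Fin.snoc_castSucc]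

theorem snoc_mul_diagonal_snoc_zero_mul_transpose (A : Matrix l (Fin n) R) (a : l → R)
    (d : Fin n → R) (e : Fin (n + 1) → R) (C : Matrix k (Fin n) R) (c : k → R) :
    (of fun i => Fin.snoc (A i) (a i)) *
        (diagonal (Fin.snoc d 0) * (diagonal e * (of fun i => Fin.snoc (C i) (c i))ᵀ)) =
      A * (diagonal d * (diagonal (fun j : Fin n => e j.castSucc) * Cᵀ)) := by
  ext i i'
  rw [mul_apply, mul_apply, Fin.sum_univ_castSucc]
  simp [diagonal_mul]

end SnocColumn

theorem NGM_snoc_zero_risk {u v : ℕ} (Sstar ν μ γ δ : Fin u → ℝ) (B : Fin v → ℝ)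
    (M P : Matrix (Fin u) (Fin v) ℝ) (m' p' : Fin u → ℝ) :
    NGM Sstar ν μ γ δ (Fin.snoc B 0) (of fun i => Fin.snoc (M i) (m' i))
        (of fun i => Fin.snoc (P i) (p' i)) =
      NGM Sstar ν μ γ δ B M P := by
  unfold NGM
  congr 2
  simp only [Matrix.mul_assoc, snoc_mul_diagonal_snoc_zero_mul_transpose,
    transpose_snoc_mulVec_castSucc]

theorem stmt12_general (u v : ℕ)
    (μ ν γ δ : Fin u → ℝ)
    (B : Fin v → ℝ)
    (M P : Matrix (Fin u) (Fin v) ℝ)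
    (Sstar : Fin u → ℝ)
    (m' p' : Fin u → ℝ) :
    specRad (NGM Sstar ν μ γ δ (Fin.snoc B 0)
        (Matrix.of fun i => Fin.snoc (M i) (m' i))
        (Matrix.of fun i => Fin.snoc (P i) (p' i))) =
      specRad (NGM Sstar ν μ γ δ B M P) := by
  rw [NGM_snoc_zero_risk]

/-- appending one zero-risk patch (with arbitrary nonnegative extra
columns of residence times) leaves the basic reproduction number unchanged. -/
theorem stmt12 (u v : ℕ) (hu : 1 ≤ u) (hv : 1 ≤ v)
    (Λ μ ν γ δ η : Fin u → ℝ)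
    (hΛ : ∀ i, 0 < Λ i) (hμ : ∀ i, 0 < μ i) (hν : ∀ i, 0 < ν i) (hγ : ∀ i, 0 < γ i)
    (hδ : ∀ i, 0 ≤ δ i) (hη : ∀ i, 0 ≤ η i)
    (B : Fin v → ℝ) (hB : ∀ j, 0 ≤ B j)
    (M P : Matrix (Fin u) (Fin v) ℝ)
    (hM : ∀ i j, 0 ≤ M i j) (hP : ∀ i j, 0 ≤ P i j)
    (Sstar : Fin u → ℝ) (hSstar : ∀ i, Sstar i = Λ i / μ i)
    (hMS : ∀ j, 0 < (Mᵀ *ᵥ Sstar) j)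
    (m' p' : Fin u → ℝ) (hm' : ∀ i, 0 ≤ m' i) (hp' : ∀ i, 0 ≤ p' i)
    (hMtS : ∀ j, 0 < ((Matrix.of fun i => Fin.snoc (M i) (m' i))ᵀ *ᵥ Sstar) j) :
    specRad (NGM Sstar ν μ γ δ (Fin.snoc B 0)
        (Matrix.of fun i => Fin.snoc (M i) (m' i))
        (Matrix.of fun i => Fin.snoc (P i) (p' i))) =
      specRad (NGM Sstar ν μ γ δ B M P) :=
  stmt12_general u v μ ν γ δ B M P Sstar m' p'
end

section
/- A tuple (S,E,I,R) ∈ (ℝ^u)^4 with all entries of I positive satisfies the equilibrium equations of the density-dependent model, namely 0 = Λ − diag(S)·M·diag(B)·Pᵀ·I − diag(μ)·S + diag(η)·R, 0 = diag(S)·M·diag(B)·Pᵀ·I − diag(ν+μ)·E, 0 = diag(ν)·E − diag(γ+μ+δ)·I, and 0 = diag(γ)·I − diag(η+μ)·R, if and only if E has all entries positive, E is a fixed point of g (i.e., g(E) = E), and S = S* − K·E, I = L·E, R = A·E. Consequently the model has a unique endemic equilibrium if and only if g has a unique fixed point with all entries positive. -/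
/-! Every equation except the first is linear and diagonal, so it can be solved for `I`, `R` and
(using the second equation to eliminate the infection term from the first) for `S` in terms of `E`;
what remains of the second equation is then exactly the fixed-point equation `g(E) = E`.
Positivity of `I = L·E` is equivalent to positivity of `E`, so endemic equilibria correspond
bijectively, via their `E`-component, to positive fixed points of `g`. -/

open Matrix

/-- `A = diag(η+μ)⁻¹·diag(γ)·diag(γ+μ+δ)⁻¹·diag(ν)`. -/
noncomputable def Amat {u : ℕ} (μ ν γ δ η : Fin u → ℝ) : Matrix (Fin u) (Fin u) ℝ :=
  Matrix.diagonal (fun i => (η i + μ i)⁻¹) * Matrix.diagonal γ *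
    Matrix.diagonal (fun i => (γ i + μ i + δ i)⁻¹) * Matrix.diagonal ν

/-- `L = diag(γ+μ+δ)⁻¹·diag(ν)`. -/
noncomputable def Lmat {u : ℕ} (μ ν γ δ : Fin u → ℝ) : Matrix (Fin u) (Fin u) ℝ :=
  Matrix.diagonal (fun i => (γ i + μ i + δ i)⁻¹) * Matrix.diagonal ν

/-- `K = diag(μ)⁻¹·diag(ν+μ) − diag(μ)⁻¹·diag(η)·A`. -/
noncomputable def Kmat {u : ℕ} (μ ν γ δ η : Fin u → ℝ) : Matrix (Fin u) (Fin u) ℝ :=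
  Matrix.diagonal (fun i => (μ i)⁻¹) * Matrix.diagonal (fun i => ν i + μ i) -
    Matrix.diagonal (fun i => (μ i)⁻¹) * Matrix.diagonal η * Amat μ ν γ δ η

/-- `g(y) = diag(ν+μ)⁻¹·diag(S* − K·y)·M·diag(B)·Pᵀ·L·y`. -/
noncomputable def gmap {u v : ℕ} (μ ν γ δ η Sstar : Fin u → ℝ) (B : Fin v → ℝ)
    (M P : Matrix (Fin u) (Fin v) ℝ) (y : Fin u → ℝ) : Fin u → ℝ :=
  (Matrix.diagonal (fun i => (ν i + μ i)⁻¹) *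
      Matrix.diagonal (Sstar - Kmat μ ν γ δ η *ᵥ y) *
      M * Matrix.diagonal B * Pᵀ * Lmat μ ν γ δ) *ᵥ y

theorem Function.LeftInverse.existsUnique_iff {α β : Sort*} {p : α → Prop} {q : β → Prop}
    {f : α → β} {s : β → α} (hfs : Function.LeftInverse f s)
    (h : ∀ x, p x ↔ q (f x) ∧ x = s (f x)) : (∃! x, p x) ↔ ∃! y, q y := by
  constructor
  · rintro ⟨x, hx, hx_uniq⟩
    refine ⟨f x, ((h x).1 hx).1, fun y hy => ?_⟩
    rw [← hx_uniq (s y) ((h _).2 ⟨(hfs y).symm ▸ hy, by rw [hfs]⟩), hfs]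
  · rintro ⟨y, hy, hy_uniq⟩
    refine ⟨s y, (h _).2 ⟨(hfs y).symm ▸ hy, by rw [hfs]⟩, fun x hx => ?_⟩
    obtain ⟨hqx, hx_eq⟩ := (h x).1 hx
    rw [hx_eq, hy_uniq _ hqx]

section Pointwise

variable {ι : Type*}

theorem Pi.zero_eq_sub_mul_iff {K : Type*} [Field K] {a b x : ι → K} (ha : ∀ i, a i ≠ 0) :
    0 = b - a * x ↔ x = a⁻¹ * b := by
  simp only [funext_iff, Pi.zero_apply, Pi.sub_apply, Pi.mul_apply, Pi.inv_apply]
  exact forall_congr' fun i => by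
    rw [eq_comm, sub_eq_zero, eq_inv_mul_iff_mul_eq₀ (ha i), eq_comm]

theorem Pi.inv_mul_eq_iff_eq_mul {K : Type*} [Field K] {a x y : ι → K} (ha : ∀ i, a i ≠ 0) :
    a⁻¹ * x = y ↔ x = a * y := by
  simp only [funext_iff, Pi.mul_apply, Pi.inv_apply]
  exact forall_congr' fun i => inv_mul_eq_iff_eq_mul₀ (ha i)

variable [Fintype ι] [DecidableEq ι] {R : Type*} [CommSemiring R]

theorem Matrix.diagonal_mulVec_eq_mul (d x : ι → R) : diagonal d *ᵥ x = d * x :=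
  funext (mulVec_diagonal d x)

theorem Matrix.diagonal_mul_mulVec {κ : Type*} [Fintype κ] (d : ι → R) (N : Matrix ι κ R)
    (x : κ → R) : (diagonal d * N) *ᵥ x = d * (N *ᵥ x) := by
  rw [← mulVec_mulVec, diagonal_mulVec_eq_mul]

end Pointwise

section Model

variable {u v : ℕ} (Λ μ ν γ δ η Sstar : Fin u → ℝ) (B : Fin v → ℝ)
  (M P : Matrix (Fin u) (Fin v) ℝ)

def IsEquilibrium (S E I R : Fin u → ℝ) : Prop :=
  0 = Λ - (diagonal S * M * diagonal B * Pᵀ) *ᵥ I -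
      diagonal μ *ᵥ S + diagonal η *ᵥ R ∧
    0 = (diagonal S * M * diagonal B * Pᵀ) *ᵥ I -
      diagonal (fun i => ν i + μ i) *ᵥ E ∧
    0 = diagonal ν *ᵥ E - diagonal (fun i => γ i + μ i + δ i) *ᵥ I ∧
    0 = diagonal γ *ᵥ I - diagonal (fun i => η i + μ i) *ᵥ R

theorem Lmat_mulVec (x : Fin u → ℝ) :
    Lmat μ ν γ δ *ᵥ x = (fun i => γ i + μ i + δ i)⁻¹ * (ν * x) := by
  simp only [Lmat, ← mulVec_mulVec, diagonal_mulVec_eq_mul]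
  rfl

theorem Amat_mulVec (x : Fin u → ℝ) :
    Amat μ ν γ δ η *ᵥ x = (fun i => η i + μ i)⁻¹ * (γ * (Lmat μ ν γ δ *ᵥ x)) := by
  simp only [Amat, Lmat, ← mulVec_mulVec, diagonal_mulVec_eq_mul]
  rfl

theorem Kmat_mulVec (x : Fin u → ℝ) :
    Kmat μ ν γ δ η *ᵥ x = μ⁻¹ * ((ν + μ) * x) - μ⁻¹ * (η * (Amat μ ν γ δ η *ᵥ x)) := by
  simp only [Kmat, sub_mulVec, ← mulVec_mulVec, diagonal_mulVec_eq_mul]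
  rfl

theorem gmap_eq (y : Fin u → ℝ) :
    gmap μ ν γ δ η Sstar B M P y = (ν + μ)⁻¹ *
      ((Sstar - Kmat μ ν γ δ η *ᵥ y) * ((M * diagonal B * Pᵀ) *ᵥ (Lmat μ ν γ δ *ᵥ y))) := by
  simp only [gmap, ← mulVec_mulVec, diagonal_mulVec_eq_mul]
  rfl

variable {Λ μ ν γ δ η Sstar B M P}

theorem Lmat_mulVec_pos_iff (hν : ∀ i, 0 < ν i) (hc : ∀ i, 0 < γ i + μ i + δ i)
    (x : Fin u → ℝ) : (∀ i, 0 < (Lmat μ ν γ δ *ᵥ x) i) ↔ ∀ i, 0 < x i := by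
  refine forall_congr' fun i => ?_
  rw [Lmat_mulVec, Pi.mul_apply, Pi.mul_apply, Pi.inv_apply,
    mul_pos_iff_of_pos_left (inv_pos.2 (hc i)), mul_pos_iff_of_pos_left (hν i)]

theorem gmap_eq_self_iff (hn : ∀ i, ν i + μ i ≠ 0) {S E I : Fin u → ℝ}
    (hS : S = Sstar - Kmat μ ν γ δ η *ᵥ E) (hI : I = Lmat μ ν γ δ *ᵥ E) :
    gmap μ ν γ δ η Sstar B M P E = E ↔
      S * ((M * diagonal B * Pᵀ) *ᵥ I) = (ν + μ) * E := by
  rw [gmap_eq, ← hS, ← hI]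
  exact Pi.inv_mul_eq_iff_eq_mul hn

theorem isEquilibrium_iff_solved (hμ : ∀ i, μ i ≠ 0) (hc : ∀ i, γ i + μ i + δ i ≠ 0)
    (he : ∀ i, η i + μ i ≠ 0) (hSstar : ∀ i, Sstar i = Λ i / μ i) (S E I R : Fin u → ℝ) :
    IsEquilibrium Λ μ ν γ δ η B M P S E I R ↔
      I = Lmat μ ν γ δ *ᵥ E ∧ R = Amat μ ν γ δ η *ᵥ E ∧
        S * ((M * diagonal B * Pᵀ) *ᵥ I) = (ν + μ) * E ∧ S = Sstar - Kmat μ ν γ δ η *ᵥ E := by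
  have hSstar' : Sstar = μ⁻¹ * Λ := funext fun i => by simp [hSstar i, div_eq_inv_mul]
  simp only [IsEquilibrium, Matrix.mul_assoc, diagonal_mul_mulVec, diagonal_mulVec_eq_mul]
  set F := (M * (diagonal B * Pᵀ)) *ᵥ I
  have hI_iff : 0 = ν * E - (fun i => γ i + μ i + δ i) * I ↔ I = Lmat μ ν γ δ *ᵥ E := by
    rw [Lmat_mulVec]
    exact Pi.zero_eq_sub_mul_iff hc
  have hR_iff : 0 = γ * I - (fun i => η i + μ i) * R ↔ R = (fun i => η i + μ i)⁻¹ * (γ * I) :=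
    Pi.zero_eq_sub_mul_iff he
  have hSF_iff : 0 = S * F - (fun i => ν i + μ i) * E ↔ S * F = (ν + μ) * E := by
    rw [eq_comm, sub_eq_zero]
    rfl
  have hS_iff (hSF : S * F = (ν + μ) * E) (hR : R = Amat μ ν γ δ η *ᵥ E) :
      0 = Λ - S * F - μ * S + η * R ↔ S = Sstar - Kmat μ ν γ δ η *ᵥ E := by
    rw [hSF, Kmat_mulVec, ← hR, hSstar',
      show Λ - (ν + μ) * E - μ * S + η * R = (Λ - (ν + μ) * E + η * R) - μ * S by ring,
      Pi.zero_eq_sub_mul_iff hμ]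
    ring_nf
  rw [hI_iff, hSF_iff]
  constructor
  · rintro ⟨h_eq1, hSF, rfl, h_eq4⟩
    have hR : R = Amat μ ν γ δ η *ᵥ E := by rw [hR_iff.1 h_eq4, Amat_mulVec]
    exact ⟨rfl, hR, hSF, (hS_iff hSF hR).1 h_eq1⟩
  · rintro ⟨rfl, hR, hSF, hS⟩
    exact ⟨(hS_iff hSF hR).2 hS, hSF, rfl, hR_iff.2 (by rw [hR, Amat_mulVec])⟩

theorem isEquilibrium_iff_isFixedPt (hμ : ∀ i, 0 < μ i) (hν : ∀ i, 0 < ν i)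
    (hγ : ∀ i, 0 < γ i) (hδ : ∀ i, 0 ≤ δ i) (hη : ∀ i, 0 ≤ η i)
    (hSstar : ∀ i, Sstar i = Λ i / μ i) (S E I R : Fin u → ℝ) (hI : ∀ i, 0 < I i) :
    IsEquilibrium Λ μ ν γ δ η B M P S E I R ↔
      (∀ i, 0 < E i) ∧ gmap μ ν γ δ η Sstar B M P E = E ∧
        S = Sstar - Kmat μ ν γ δ η *ᵥ E ∧ I = Lmat μ ν γ δ *ᵥ E ∧
        R = Amat μ ν γ δ η *ᵥ E := by
  have hc : ∀ i, 0 < γ i + μ i + δ i := fun i => by linarith [hγ i, hμ i, hδ i]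
  have he : ∀ i, 0 < η i + μ i := fun i => by linarith [hη i, hμ i]
  have hn : ∀ i, 0 < ν i + μ i := fun i => by linarith [hν i, hμ i]
  rw [isEquilibrium_iff_solved (fun i => (hμ i).ne') (fun i => (hc i).ne')
    (fun i => (he i).ne') hSstar]
  constructor
  · rintro ⟨rfl, hR, hSF, hS⟩
    exact ⟨(Lmat_mulVec_pos_iff hν hc E).1 hI,
      (gmap_eq_self_iff (fun i => (hn i).ne') hS rfl).2 hSF, hS, rfl, hR⟩
  · rintro ⟨-, hg, hS, hIE, hR⟩
    exact ⟨hIE, hR, (gmap_eq_self_iff (fun i => (hn i).ne') hS hIE).1 hg, hS⟩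

end Model

theorem stmt14_general (u v : ℕ)
    (Λ μ ν γ δ η : Fin u → ℝ)
    (hμ : ∀ i, 0 < μ i) (hν : ∀ i, 0 < ν i) (hγ : ∀ i, 0 < γ i)
    (hδ : ∀ i, 0 ≤ δ i) (hη : ∀ i, 0 ≤ η i)
    (B : Fin v → ℝ)
    (M P : Matrix (Fin u) (Fin v) ℝ)
    (Sstar : Fin u → ℝ) (hSstar : ∀ i, Sstar i = Λ i / μ i) :
    (∀ S E I R : Fin u → ℝ, (∀ i, 0 < I i) →
      ((0 = Λ - (Matrix.diagonal S * M * Matrix.diagonal B * Pᵀ) *ᵥ I -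
            Matrix.diagonal μ *ᵥ S + Matrix.diagonal η *ᵥ R ∧
        0 = (Matrix.diagonal S * M * Matrix.diagonal B * Pᵀ) *ᵥ I -
            Matrix.diagonal (fun i => ν i + μ i) *ᵥ E ∧
        0 = Matrix.diagonal ν *ᵥ E - Matrix.diagonal (fun i => γ i + μ i + δ i) *ᵥ I ∧
        0 = Matrix.diagonal γ *ᵥ I - Matrix.diagonal (fun i => η i + μ i) *ᵥ R) ↔
      ((∀ i, 0 < E i) ∧ gmap μ ν γ δ η Sstar B M P E = E ∧
        S = Sstar - Kmat μ ν γ δ η *ᵥ E ∧ I = Lmat μ ν γ δ *ᵥ E ∧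
        R = Amat μ ν γ δ η *ᵥ E))) ∧
    ((∃! x : (Fin u → ℝ) × (Fin u → ℝ) × (Fin u → ℝ) × (Fin u → ℝ),
        (∀ i, 0 < x.2.2.1 i) ∧
        0 = Λ - (Matrix.diagonal x.1 * M * Matrix.diagonal B * Pᵀ) *ᵥ x.2.2.1 -
            Matrix.diagonal μ *ᵥ x.1 + Matrix.diagonal η *ᵥ x.2.2.2 ∧
        0 = (Matrix.diagonal x.1 * M * Matrix.diagonal B * Pᵀ) *ᵥ x.2.2.1 -
            Matrix.diagonal (fun i => ν i + μ i) *ᵥ x.2.1 ∧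
        0 = Matrix.diagonal ν *ᵥ x.2.1 -
            Matrix.diagonal (fun i => γ i + μ i + δ i) *ᵥ x.2.2.1 ∧
        0 = Matrix.diagonal γ *ᵥ x.2.2.1 -
            Matrix.diagonal (fun i => η i + μ i) *ᵥ x.2.2.2) ↔
      (∃! y : Fin u → ℝ, (∀ i, 0 < y i) ∧ gmap μ ν γ δ η Sstar B M P y = y)) := by
  have key := isEquilibrium_iff_isFixedPt (B := B) (M := M) (P := P) hμ hν hγ hδ hη hSstar
  have hc : ∀ i, 0 < γ i + μ i + δ i := fun i => by linarith [hγ i, hμ i, hδ i]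
  refine ⟨key, Function.LeftInverse.existsUnique_iff (f := fun x => x.2.1)
    (s := fun y => (Sstar - Kmat μ ν γ δ η *ᵥ y, y, Lmat μ ν γ δ *ᵥ y, Amat μ ν γ δ η *ᵥ y))
    (fun _ => rfl) ?_⟩
  rintro ⟨S, E, I, R⟩
  constructor
  · rintro ⟨hI, h⟩
    obtain ⟨hE, hg, rfl, rfl, rfl⟩ := (key S E I R hI).1 h
    exact ⟨⟨hE, hg⟩, rfl⟩
  · rintro ⟨⟨hE, hg⟩, hx⟩
    simp only [Prod.mk.injEq] at hE hg hx ⊢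
    obtain ⟨rfl, -, rfl, rfl⟩ := hx
    have hI := (Lmat_mulVec_pos_iff hν hc E).2 hE
    exact ⟨hI, (key _ _ _ _ hI).2 ⟨hE, hg, rfl, rfl, rfl⟩⟩

/-- a tuple `(S,E,I,R)` with `I ≫ 0` is an equilibrium of the
density-dependent model iff `E ≫ 0`, `g(E) = E`, and `S = S* − K·E`, `I = L·E`,
`R = A·E`; consequently the model has a unique endemic equilibrium iff `g` has a
unique positive fixed point. -/
theorem stmt14 (u v : ℕ) (hu : 1 ≤ u) (hv : 1 ≤ v)
    (Λ μ ν γ δ η : Fin u → ℝ)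
    (hΛ : ∀ i, 0 < Λ i) (hμ : ∀ i, 0 < μ i) (hν : ∀ i, 0 < ν i) (hγ : ∀ i, 0 < γ i)
    (hδ : ∀ i, 0 ≤ δ i) (hη : ∀ i, 0 ≤ η i)
    (B : Fin v → ℝ) (hB : ∀ j, 0 ≤ B j)
    (M P : Matrix (Fin u) (Fin v) ℝ)
    (hM : ∀ i j, 0 ≤ M i j) (hP : ∀ i j, 0 ≤ P i j)
    (Sstar : Fin u → ℝ) (hSstar : ∀ i, Sstar i = Λ i / μ i) :
    (∀ S E I R : Fin u → ℝ, (∀ i, 0 < I i) →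
      ((0 = Λ - (Matrix.diagonal S * M * Matrix.diagonal B * Pᵀ) *ᵥ I -
            Matrix.diagonal μ *ᵥ S + Matrix.diagonal η *ᵥ R ∧
        0 = (Matrix.diagonal S * M * Matrix.diagonal B * Pᵀ) *ᵥ I -
            Matrix.diagonal (fun i => ν i + μ i) *ᵥ E ∧
        0 = Matrix.diagonal ν *ᵥ E - Matrix.diagonal (fun i => γ i + μ i + δ i) *ᵥ I ∧
        0 = Matrix.diagonal γ *ᵥ I - Matrix.diagonal (fun i => η i + μ i) *ᵥ R) ↔
      ((∀ i, 0 < E i) ∧ gmap μ ν γ δ η Sstar B M P E = E ∧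
        S = Sstar - Kmat μ ν γ δ η *ᵥ E ∧ I = Lmat μ ν γ δ *ᵥ E ∧
        R = Amat μ ν γ δ η *ᵥ E))) ∧
    ((∃! x : (Fin u → ℝ) × (Fin u → ℝ) × (Fin u → ℝ) × (Fin u → ℝ),
        (∀ i, 0 < x.2.2.1 i) ∧
        0 = Λ - (Matrix.diagonal x.1 * M * Matrix.diagonal B * Pᵀ) *ᵥ x.2.2.1 -
            Matrix.diagonal μ *ᵥ x.1 + Matrix.diagonal η *ᵥ x.2.2.2 ∧
        0 = (Matrix.diagonal x.1 * M * Matrix.diagonal B * Pᵀ) *ᵥ x.2.2.1 -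
            Matrix.diagonal (fun i => ν i + μ i) *ᵥ x.2.1 ∧
        0 = Matrix.diagonal ν *ᵥ x.2.1 -
            Matrix.diagonal (fun i => γ i + μ i + δ i) *ᵥ x.2.2.1 ∧
        0 = Matrix.diagonal γ *ᵥ x.2.2.1 -
            Matrix.diagonal (fun i => η i + μ i) *ᵥ x.2.2.2) ↔
      (∃! y : Fin u → ℝ, (∀ i, 0 < y i) ∧ gmap μ ν γ δ η Sstar B M P y = y)) :=
  stmt14_general u v Λ μ ν γ δ η hμ hν hγ hδ hη B M P Sstar hSstar
end

section
/- Assume all entries of B are positive, the u×u matrix M·Pᵀ is irreducible (i.e., for every pair (i,j) there exists an integer n ≥ 1 with ((MPᵀ)^n)_{ij} > 0), and R0^DD > 1, where R0^DD = ρ(diag(S*)·M·diag(B)·Pᵀ·diag(ν)·diag((μ+ν)∘(μ+γ+δ))⁻¹). Then the density-dependent model has a unique endemic equilibrium: there exists exactly one tuple (S,E,I,R) ∈ (ℝ^u)^4 with all entries of I positive satisfying 0 = Λ − diag(S)·M·diag(B)·Pᵀ·I − diag(μ)·S + diag(η)·R, 0 = diag(S)·M·diag(B)·Pᵀ·I −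 diag(ν+μ)·E, 0 = diag(ν)·E − diag(γ+μ+δ)·I, and 0 = diag(γ)·I − diag(η+μ)·R. -/
/-!
Eliminating `S`, `E` and `R` turns the equilibrium equations into the fixed-point equation
`I = T I`, where `T I = Λ ∘ F I / (m + d ∘ F I)` with `F = M diag(B) Pᵀ` and positive vectors
`m`, `d`. On positive vectors `T` is monotone and strictly subhomogeneous
(`θ T I < T (θ I)` for `0 < θ < 1`), which makes a positive fixed point unique: compare two of
them, `I` and `J`, through the largest `θ` with `θ I ≤ J`. For existence, `R0^DD > 1` provides an
eigenvalue of modulus `s > 1`; the moduli of an eigenvector give a nonnegative `z` with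
`s z ≤ A z`, and irreducibility makes `∑_{k < N} Aᵏ z` a positive such vector. A small multiple
of it is a subsolution of `T`, `Λ / d` is a supersolution, and Knaster–Tarski on the order
interval between them yields the fixed point.
-/

open Matrix

open Set Filter Topology

namespace Matrix

section OrderedRing

variable {n R : Type*} [Fintype n] [CommRing R] [LinearOrder R] [IsStrictOrderedRing R]
  {A B : Matrix n n R}

theorem mulVec_mono_of_nonneg (hA : ∀ i j, 0 ≤ A i j) {x y : n → R} (hxy : x ≤ y) :
    A *ᵥ x ≤ A *ᵥ y :=
  fun i => dotProduct_le_dotProduct_of_nonneg_left hxy (hA i)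

theorem mulVec_nonneg_of_nonneg (hA : ∀ i j, 0 ≤ A i j) {x : n → R} (hx : 0 ≤ x) :
    0 ≤ A *ᵥ x := by
  simpa using mulVec_mono_of_nonneg hA hx

variable [DecidableEq n]

theorem pow_apply_pos_of_pos_imp (hA : ∀ i j, 0 ≤ A i j) (hB : ∀ i j, 0 ≤ B i j)
    (hAB : ∀ i j, 0 < A i j → 0 < B i j) (k : ℕ) (i j : n) :
    0 < (A ^ k) i j → 0 < (B ^ k) i j := by
  induction k generalizing j with
  | zero => exact id
  | succ k ih =>
    simp only [pow_succ, mul_apply]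
    rw [Finset.sum_pos_iff_of_nonneg fun l _ => mul_nonneg (pow_apply_nonneg hA k i l) (hA l j),
      Finset.sum_pos_iff_of_nonneg fun l _ => mul_nonneg (pow_apply_nonneg hB k i l) (hB l j)]
    rintro ⟨l, -, hl⟩
    exact ⟨l, Finset.mem_univ l, mul_pos (ih l (pos_of_mul_pos_left hl (hA l j)))
      (hAB l j (pos_of_mul_pos_right hl (pow_apply_nonneg hA k i l)))⟩

theorem IsIrreducible.of_pos_imp (hA : A.IsIrreducible) (hB : ∀ i j, 0 ≤ B i j)
    (hAB : ∀ i j, 0 < A i j → 0 < B i j) : B.IsIrreducible := by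
  rw [isIrreducible_iff_exists_pow_pos hB]
  intro i j
  obtain ⟨k, hk, hAk⟩ := (isIrreducible_iff_exists_pow_pos hA.nonneg).1 hA i j
  exact ⟨k, hk, pow_apply_pos_of_pos_imp hA.nonneg hB hAB k i j hAk⟩

theorem IsIrreducible.exists_apply_pos (hA : A.IsIrreducible) (i : n) : ∃ j, 0 < A i j := by
  obtain ⟨k, hk, hAk⟩ := (isIrreducible_iff_exists_pow_pos hA.nonneg).1 hA i i
  obtain ⟨k, rfl⟩ := Nat.exists_eq_add_of_lt hk
  rw [pow_succ', mul_apply, Finset.sum_pos_iff_of_nonneg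
    fun l _ => mul_nonneg (hA.nonneg i l) (pow_apply_nonneg hA.nonneg _ l i)] at hAk
  obtain ⟨j, -, hj⟩ := hAk
  exact ⟨j, pos_of_mul_pos_left hj (pow_apply_nonneg hA.nonneg _ j i)⟩

theorem IsIrreducible.mulVec_pos (hA : A.IsIrreducible) {x : n → R} (hx : ∀ i, 0 < x i)
    (i : n) : 0 < (A *ᵥ x) i := by
  obtain ⟨j, hj⟩ := hA.exists_apply_pos i
  exact (Finset.sum_pos_iff_of_nonneg fun l _ => mul_nonneg (hA.nonneg i l) (hx l).le).2
    ⟨j, Finset.mem_univ j, mul_pos hj (hx j)⟩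

theorem IsIrreducible.exists_pos_smul_le_mulVec (hA : A.IsIrreducible) {s : R} {z : n → R}
    (hz : 0 ≤ z) (hz0 : z ≠ 0) (hsz : s • z ≤ A *ᵥ z) :
    ∃ x : n → R, (∀ i, 0 < x i) ∧ s • x ≤ A *ᵥ x := by
  obtain ⟨j₀, hj₀⟩ : ∃ j, 0 < z j := by
    by_contra! h
    exact hz0 (funext fun j => le_antisymm (h j) (hz j))
  choose k _ hk using fun i => (isIrreducible_iff_exists_pow_pos hA.nonneg).1 hA i j₀
  have hpow : ∀ m, 0 ≤ A ^ m *ᵥ z :=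
    fun m => mulVec_nonneg_of_nonneg (pow_apply_nonneg hA.nonneg m) hz
  refine ⟨∑ m ∈ Finset.range (Finset.univ.sup k + 1), A ^ m *ᵥ z, fun i => ?_, ?_⟩
  · have hterm : 0 < (A ^ k i *ᵥ z) i :=
      (Finset.sum_pos_iff_of_nonneg fun l _ =>
        mul_nonneg (pow_apply_nonneg hA.nonneg _ i l) (hz l)).2
        ⟨j₀, Finset.mem_univ _, mul_pos (hk i) hj₀⟩
    refine hterm.trans_le ?_
    rw [Finset.sum_apply]
    exact Finset.single_le_sum (f := fun m => (A ^ m *ᵥ z) i) (fun m _ => hpow m i)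
      (Finset.mem_range.2 (Nat.lt_succ_of_le (Finset.le_sup (Finset.mem_univ i))))
  · rw [Finset.smul_sum, mulVec_sum]
    refine Finset.sum_le_sum fun m _ => ?_
    rw [← mulVec_smul, mulVec_mulVec, ← pow_succ', pow_succ, ← mulVec_mulVec]
    exact mulVec_mono_of_nonneg (pow_apply_nonneg hA.nonneg m) hsz

theorem IsIrreducible.diagonal_mul_mul_diagonal (hA : A.IsIrreducible) {a b : n → R}
    (ha : ∀ i, 0 < a i) (hb : ∀ i, 0 < b i) :
    (diagonal a * A * diagonal b).IsIrreducible := by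
  refine hA.of_pos_imp (fun i j => ?_) (fun i j hij => ?_) <;>
    simp only [mul_diagonal, diagonal_mul]
  · exact mul_nonneg (mul_nonneg (ha i).le (hA.nonneg i j)) (hb j).le
  · exact mul_pos (mul_pos (ha i) hij) (hb j)

theorem IsIrreducible.mul_diagonal_mul {κ : Type*} [Fintype κ] [DecidableEq κ]
    {M : Matrix n κ R} {N : Matrix κ n R} (hMN : (M * N).IsIrreducible)
    (hM : ∀ i k, 0 ≤ M i k) (hN : ∀ k j, 0 ≤ N k j) {b : κ → R} (hb : ∀ k, 0 < b k) :
    (M * diagonal b * N).IsIrreducible := by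
  have hentry : ∀ i j, (M * diagonal b * N) i j = ∑ k, M i k * b k * N k j := fun i j => by
    simp only [mul_apply (M := M * diagonal b), mul_diagonal]
  refine hMN.of_pos_imp (fun i j => ?_) (fun i j hij => ?_) <;> rw [hentry]
  · exact Finset.sum_nonneg fun k _ => mul_nonneg (mul_nonneg (hM i k) (hb k).le) (hN k j)
  · obtain ⟨k, -, hk⟩ := (Finset.sum_pos_iff_of_nonneg fun k _ =>
      mul_nonneg (hM i k) (hN k j)).1 (by rwa [mul_apply] at hij)
    refine (Finset.sum_pos_iff_of_nonneg fun k _ =>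
      mul_nonneg (mul_nonneg (hM i k) (hb k).le) (hN k j)).2 ⟨k, Finset.mem_univ k, ?_⟩
    exact mul_right_comm (M i k) (N k j) (b k) ▸ mul_pos hk (hb k)

end OrderedRing

variable {n : Type*} [Fintype n] [DecidableEq n] {A : Matrix n n ℝ}

theorem exists_nonneg_norm_smul_le_mulVec (hA : ∀ i j, 0 ≤ A i j) {r : ℂ}
    (hr : r ∈ spectrum ℂ (A.map ((↑) : ℝ → ℂ))) :
    ∃ z : n → ℝ, 0 ≤ z ∧ z ≠ 0 ∧ ‖r‖ • z ≤ A *ᵥ z := by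
  rw [← spectrum_toLin', ← Module.End.hasEigenvalue_iff_mem_spectrum] at hr
  obtain ⟨y, hy, hy0⟩ := hr.exists_hasEigenvector
  rw [Module.End.mem_eigenspace_iff, toLin'_apply] at hy
  refine ⟨fun j => ‖y j‖, fun j => norm_nonneg _, fun h => hy0 (funext fun j => ?_), fun i => ?_⟩
  · simpa using congrFun h j
  · have hyi : ∑ j, (A i j : ℂ) * y j = r * y i := by
      simpa [mulVec, dotProduct] using congrFun hy i
    calc ‖r‖ * ‖y i‖ = ‖∑ j, (A i j : ℂ) * y j‖ := by rw [hyi, norm_mul]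
      _ ≤ ∑ j, A i j * ‖y j‖ := by
          refine (norm_sum_le _ _).trans (le_of_eq (Finset.sum_congr rfl fun j _ => ?_))
          rw [norm_mul, Complex.norm_of_nonneg (hA i j)]

theorem exists_nonneg_smul_le_mulVec_of_one_lt_specRad (hA : ∀ i j, 0 ≤ A i j)
    (h : 1 < specRad A) : ∃ s : ℝ, 1 < s ∧ ∃ z : n → ℝ, 0 ≤ z ∧ z ≠ 0 ∧ s • z ≤ A *ᵥ z := by
  have hne : ((fun r : ℂ => ‖r‖) '' spectrum ℂ (A.map ((↑) : ℝ → ℂ))).Nonempty := by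
    by_contra hemp
    rw [Set.not_nonempty_iff_eq_empty] at hemp
    norm_num [specRad, hemp] at h
  obtain ⟨_, ⟨r, hr, rfl⟩, hr1⟩ := exists_lt_of_lt_csSup hne h
  exact ⟨‖r‖, hr1, exists_nonneg_norm_smul_le_mulVec hA hr⟩

theorem IsIrreducible.exists_pos_le_of_one_lt_specRad (hA : A.IsIrreducible) {a b : n → ℝ}
    (ha : ∀ i, 0 < a i) (hb : ∀ i, 0 < b i) (h : 1 < specRad (diagonal a * A * diagonal b)) :
    ∃ s : ℝ, 1 < s ∧ ∃ x : n → ℝ, (∀ i, 0 < x i) ∧ ∀ i, s * x i ≤ a i * b i * (A *ᵥ x) i := by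
  have hDAD := hA.diagonal_mul_mul_diagonal ha hb
  obtain ⟨s, hs, z, hz, hz0, hsz⟩ := exists_nonneg_smul_le_mulVec_of_one_lt_specRad hDAD.nonneg h
  obtain ⟨y, hy, hsy⟩ := hDAD.exists_pos_smul_le_mulVec hz hz0 hsz
  refine ⟨s, hs, b * y, fun i => mul_pos (hb i) (hy i), fun i => ?_⟩
  have hby : diagonal b *ᵥ y = b * y := funext fun i => mulVec_diagonal b y i
  have hsyi : s * y i ≤ a i * (A *ᵥ (b * y)) i := by
    simpa only [Matrix.mul_assoc, ← mulVec_mulVec, mulVec_diagonal, hby, Pi.smul_apply,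
      smul_eq_mul] using hsy i
  calc s * (b * y) i = b i * (s * y i) := by rw [Pi.mul_apply]; ring
    _ ≤ b i * (a i * (A *ᵥ (b * y)) i) := mul_le_mul_of_nonneg_left hsyi (hb i).le
    _ = a i * b i * (A *ᵥ (b * y)) i := by ring

end Matrix

theorem exists_mem_Icc_isFixedPt_of_monotoneOn {α : Type*} [ConditionallyCompleteLattice α]
    {f : α → α} {a b : α} (hab : a ≤ b) (hf : MonotoneOn f (Icc a b)) (ha : a ≤ f a)
    (hb : f b ≤ b) : ∃ x ∈ Icc a b, Function.IsFixedPt f x := by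
  have : Fact (a ≤ b) := ⟨hab⟩
  have hmaps : ∀ x ∈ Icc a b, f x ∈ Icc a b := fun x hx =>
    ⟨ha.trans (hf ⟨le_rfl, hab⟩ hx hx.1), (hf hx ⟨hab, le_rfl⟩ hx.2).trans hb⟩
  let g : Icc a b →o Icc a b :=
    ⟨fun x => ⟨f x, hmaps x x.2⟩, fun x y hxy => hf x.2 y.2 hxy⟩
  exact ⟨g.lfp, g.lfp.2, congrArg Subtype.val g.map_lfp⟩

theorem le_of_isFixedPt_of_strictSubhomogeneous {ι : Type*} [Finite ι] {T : (ι → ℝ) → ι → ℝ}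
    (hmono : ∀ x y, (∀ i, 0 < x i) → x ≤ y → T x ≤ T y)
    (hsub : ∀ x, (∀ i, 0 < x i) → ∀ θ : ℝ, 0 < θ → θ < 1 → ∀ i, θ * T x i < T (θ • x) i)
    {x y : ι → ℝ} (hx : ∀ i, 0 < x i) (hy : ∀ i, 0 < y i) (hTx : Function.IsFixedPt T x)
    (hTy : Function.IsFixedPt T y) : x ≤ y := by
  cases isEmpty_or_nonempty ι
  · exact fun i => isEmptyElim i
  obtain ⟨i₀, hi₀⟩ := Finite.exists_min fun i => y i / x i
  set θ := y i₀ / x i₀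
  have hθx : θ • x ≤ y := fun i => (le_div_iff₀ (hx i)).1 (hi₀ i)
  by_contra hxy
  have hθ1 : θ < 1 := by
    by_contra! h
    exact hxy fun i => (le_mul_of_one_le_left (hx i).le h).trans (hθx i)
  have hθ : 0 < θ := div_pos (hy i₀) (hx i₀)
  have : y i₀ < y i₀ :=
    calc y i₀ = θ * T x i₀ := by rw [hTx.eq]; exact (div_mul_cancel₀ _ (hx i₀).ne').symm
      _ < T (θ • x) i₀ := hsub x hx θ hθ hθ1 i₀
      _ ≤ T y i₀ := hmono _ _ (fun i => mul_pos hθ (hx i)) hθx i₀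
      _ = y i₀ := by rw [hTy.eq]
  exact lt_irrefl _ this

noncomputable def saturatingMap {ι : Type*} [Fintype ι] (F : Matrix ι ι ℝ) (a m d : ι → ℝ)
    (x : ι → ℝ) : ι → ℝ :=
  fun i => a i * (F *ᵥ x) i / (m i + d i * (F *ᵥ x) i)

namespace saturatingMap

variable {ι : Type*} [Fintype ι] {F : Matrix ι ι ℝ} {a m d : ι → ℝ}

theorem mono (hF : ∀ i j, 0 ≤ F i j) (ha : ∀ i, 0 ≤ a i) (hm : ∀ i, 0 < m i)
    (hd : ∀ i, 0 ≤ d i) {x y : ι → ℝ} (hx : 0 ≤ x) (hxy : x ≤ y) :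
    saturatingMap F a m d x ≤ saturatingMap F a m d y := by
  intro i
  have hw : 0 ≤ (F *ᵥ x) i := mulVec_nonneg_of_nonneg hF hx i
  have hww := mulVec_mono_of_nonneg hF hxy i
  unfold saturatingMap
  rw [div_le_div_iff₀ (by nlinarith [hm i, hd i]) (by nlinarith [hm i, hd i])]
  nlinarith [mul_le_mul_of_nonneg_left hww (mul_nonneg (ha i) (hm i).le), mul_nonneg (ha i) (hd i)]

theorem le_div (hF : ∀ i j, 0 ≤ F i j) (ha : ∀ i, 0 ≤ a i) (hm : ∀ i, 0 < m i)
    (hd : ∀ i, 0 < d i) {x : ι → ℝ} (hx : 0 ≤ x) :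
    saturatingMap F a m d x ≤ a / d := by
  intro i
  have hw : 0 ≤ (F *ᵥ x) i := mulVec_nonneg_of_nonneg hF hx i
  unfold saturatingMap
  rw [Pi.div_apply, div_le_div_iff₀ (by nlinarith [hm i, hd i]) (hd i)]
  nlinarith [mul_nonneg (ha i) (hm i).le]

theorem mul_apply_lt_apply_smul [DecidableEq ι] (hF : F.IsIrreducible) (ha : ∀ i, 0 < a i)
    (hm : ∀ i, 0 < m i) (hd : ∀ i, 0 < d i) {x : ι → ℝ} (hx : ∀ i, 0 < x i) {θ : ℝ} (hθ : 0 < θ) (hθ1 : θ < 1)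
    (i : ι) : θ * saturatingMap F a m d x i < saturatingMap F a m d (θ • x) i := by
  have hw := hF.mulVec_pos hx i
  unfold saturatingMap
  simp only [mulVec_smul, Pi.smul_apply, smul_eq_mul]
  rw [mul_div_assoc', div_lt_div_iff₀ (by nlinarith [hm i, hd i])
    (by nlinarith [hm i, hd i, mul_pos hθ hw])]
  nlinarith [mul_pos (mul_pos (mul_pos (ha i) (hd i)) (mul_pos hθ hw)) (mul_pos hw (sub_pos.2 hθ1))]

theorem exists_smul_le_apply_smul (hF : ∀ i j, 0 ≤ F i j) (hm : ∀ i, 0 < m i) (hd : ∀ i, 0 < d i)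
    {x : ι → ℝ} (hx : ∀ i, 0 < x i) {s : ℝ} (hs : 1 < s)
    (hsub : ∀ i, s * x i ≤ a i / m i * (F *ᵥ x) i) :
    ∃ ε : ℝ, 0 < ε ∧ ε • x ≤ saturatingMap F a m d (ε • x) := by
  have hsmall : ∀ i, ∀ᶠ ε in 𝓝 (0 : ℝ), ε * (d i * (F *ᵥ x) i) < (s - 1) * m i := fun i =>
    ((continuous_mul_const _).tendsto' 0 0 (zero_mul _)).eventually_lt_const
      (mul_pos (sub_pos.2 hs) (hm i))
  obtain ⟨ε, hε, hεpos : 0 < ε⟩ :=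
    (((eventually_all.2 hsmall).filter_mono nhdsWithin_le_nhds).and self_mem_nhdsWithin).exists
      (f := 𝓝[>] (0 : ℝ))
  refine ⟨ε, hεpos, fun i => ?_⟩
  have hw : 0 ≤ (F *ᵥ x) i := mulVec_nonneg_of_nonneg hF (fun j => (hx j).le) i
  have hsubi : s * x i * m i ≤ a i * (F *ᵥ x) i := by
    rw [← le_div_iff₀ (hm i), ← div_mul_eq_mul_div]
    exact hsub i
  unfold saturatingMap
  simp only [mulVec_smul, Pi.smul_apply, smul_eq_mul]
  rw [le_div_iff₀ (by nlinarith [hm i, mul_nonneg (hd i).le (mul_nonneg hεpos.le hw)])]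
  nlinarith [mul_le_mul_of_nonneg_left (hε i).le (mul_nonneg hεpos.le (hx i).le),
    mul_le_mul_of_nonneg_left hsubi hεpos.le]

theorem isFixedPt_iff (hF : ∀ i j, 0 ≤ F i j) (hm : ∀ i, 0 < m i) (hd : ∀ i, 0 ≤ d i)
    {x : ι → ℝ} (hx : 0 ≤ x) :
    Function.IsFixedPt (saturatingMap F a m d) x ↔
      ∀ i, x i * (m i + d i * (F *ᵥ x) i) = a i * (F *ᵥ x) i := by
  refine funext_iff.trans (forall_congr' fun i => ?_)
  have hw : 0 ≤ (F *ᵥ x) i := mulVec_nonneg_of_nonneg hF hx i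
  rw [saturatingMap, div_eq_iff (by nlinarith [hm i, hd i]), eq_comm]

theorem existsUnique_pos_isFixedPt [DecidableEq ι] (hF : F.IsIrreducible) (ha : ∀ i, 0 < a i)
    (hm : ∀ i, 0 < m i) (hd : ∀ i, 0 < d i) {x : ι → ℝ} (hx : ∀ i, 0 < x i) {s : ℝ}
    (hs : 1 < s) (hsub : ∀ i, s * x i ≤ a i / m i * (F *ᵥ x) i) :
    ∃! y : ι → ℝ, (∀ i, 0 < y i) ∧ Function.IsFixedPt (saturatingMap F a m d) y := by
  have hmono : ∀ y z : ι → ℝ, 0 ≤ y → y ≤ z →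
      saturatingMap F a m d y ≤ saturatingMap F a m d z :=
    fun y z hy hyz => mono hF.nonneg (fun i => (ha i).le) hm (fun i => (hd i).le) hy hyz
  obtain ⟨ε, hε, hεx⟩ := exists_smul_le_apply_smul hF.nonneg hm hd hx hs hsub
  have hεx_pos : ∀ i, 0 < (ε • x) i := fun i => mul_pos hε (hx i)
  obtain ⟨y, ⟨hεxy, -⟩, hy⟩ := exists_mem_Icc_isFixedPt_of_monotoneOn le_sup_left
    (fun y hy z _ hyz => hmono y z (fun i => (hεx_pos i).le.trans (hy.1 i)) hyz) hεx
    ((le_div hF.nonneg (fun i => (ha i).le) hm hd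
      (fun i => (hεx_pos i).le.trans (le_sup_left (b := a / d) i))).trans le_sup_right)
  have hy_pos : ∀ i, 0 < y i := fun i => (hεx_pos i).trans_le (hεxy i)
  have hle : ∀ z w : ι → ℝ, (∀ i, 0 < z i) → (∀ i, 0 < w i) →
      Function.IsFixedPt (saturatingMap F a m d) z →
      Function.IsFixedPt (saturatingMap F a m d) w → z ≤ w :=
    fun _ _ => le_of_isFixedPt_of_strictSubhomogeneous (fun z w hz => hmono z w fun i => (hz i).le)
      fun z hz θ hθ hθ1 => mul_apply_lt_apply_smul hF ha hm hd hz hθ hθ1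
  exact ⟨y, ⟨hy_pos, hy⟩, fun z ⟨hz, hTz⟩ =>
    le_antisymm (hle z y hz hy_pos hTz hy) (hle y z hy_pos hz hy hTz)⟩

end saturatingMap

theorem equilibrium_equations_iff {Λ μ ν γ δ η c d w S E I R : ℝ} (hμ : μ ≠ 0) (hν : ν ≠ 0)
    (hημ : η + μ ≠ 0) (hc : c * ν = (μ + ν) * (μ + γ + δ))
    (hd : d * (η + μ) = c * (η + μ) - η * γ) :
    (0 = Λ - S * w - μ * S + η * R ∧ 0 = S * w - (ν + μ) * E ∧
      0 = ν * E - (γ + μ + δ) * I ∧ 0 = γ * I - (η + μ) * R) ↔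
    (I * (μ * c + d * w) = Λ * w ∧ S = (Λ - d * I) / μ ∧ E = (γ + μ + δ) * I / ν ∧
      R = γ * I / (η + μ)) := by
  constructor
  · rintro ⟨h1, h2, h3, h4⟩
    have hSw : S * w = c * I :=
      mul_right_cancel₀ hν (by linear_combination -ν * h2 - (ν + μ) * h3 - I * hc)
    have hS : μ * S = Λ - d * I :=
      mul_left_cancel₀ hημ (by linear_combination (η + μ) * h1 - (η + μ) * hSw + η * h4 + I * hd)
    refine ⟨by linear_combination w * hS - μ * hSw, ?_, ?_, ?_⟩
    · rw [eq_div_iff hμ]; linear_combination hS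
    · rw [eq_div_iff hν]; linear_combination -h3
    · rw [eq_div_iff hημ]; linear_combination h4
  · rintro ⟨hfix, rfl, rfl, rfl⟩
    refine ⟨?_, ?_, ?_, ?_⟩ <;> field_simp
    · linear_combination -(η + μ) * hfix - μ * I * hd
    · linear_combination ν * hfix - μ * I * hc
    · ring
    · ring

theorem equilibrium_coefficients_pos {μ ν γ δ η c d : ℝ} (hμ : 0 < μ) (hν : 0 < ν) (hγ : 0 ≤ γ)
    (hδ : 0 ≤ δ) (hη : 0 ≤ η) (hc : c * ν = (μ + ν) * (μ + γ + δ))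
    (hd : d * (η + μ) = c * (η + μ) - η * γ) : 0 < c ∧ 0 < d := by
  have hγc : γ < c := lt_of_mul_lt_mul_right (by nlinarith) hν.le
  exact ⟨hγ.trans_lt hγc, pos_of_mul_pos_left (b := η + μ) (by nlinarith) (by linarith)⟩

theorem equilibrium_iff {ι κ : Type*} [Fintype ι] [Fintype κ] [DecidableEq ι] [DecidableEq κ]
    {Λ μ ν γ δ η c d : ι → ℝ} {B : κ → ℝ} {M P : Matrix ι κ ℝ} (hμ : ∀ i, 0 < μ i)
    (hν : ∀ i, 0 < ν i) (hημ : ∀ i, 0 < η i + μ i)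
    (hc : ∀ i, c i * ν i = (μ i + ν i) * (μ i + γ i + δ i))
    (hd : ∀ i, d i * (η i + μ i) = c i * (η i + μ i) - η i * γ i) {S E I R : ι → ℝ} :
    (0 = Λ - (diagonal S * M * diagonal B * Pᵀ) *ᵥ I - diagonal μ *ᵥ S + diagonal η *ᵥ R ∧
      0 = (diagonal S * M * diagonal B * Pᵀ) *ᵥ I - diagonal (fun i => ν i + μ i) *ᵥ E ∧
      0 = diagonal ν *ᵥ E - diagonal (fun i => γ i + μ i + δ i) *ᵥ I ∧
      0 = diagonal γ *ᵥ I - diagonal (fun i => η i + μ i) *ᵥ R) ↔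
    ((∀ i, I i * (μ i * c i + d i * ((M * diagonal B * Pᵀ) *ᵥ I) i) =
        Λ i * ((M * diagonal B * Pᵀ) *ᵥ I) i) ∧
      S = (Λ - d * I) / μ ∧ E = (γ + μ + δ) * I / ν ∧ R = γ * I / (η + μ)) := by
  have hSF : (diagonal S * M * diagonal B * Pᵀ) *ᵥ I = S * ((M * diagonal B * Pᵀ) *ᵥ I) := by
    ext i
    simp only [Matrix.mul_assoc, ← mulVec_mulVec, mulVec_diagonal, Pi.mul_apply]
  simp only [hSF, funext_iff, Pi.zero_apply, Pi.sub_apply, Pi.add_apply, Pi.mul_apply,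
    Pi.div_apply, mulVec_diagonal, ← forall_and]
  exact forall_congr' fun i => equilibrium_equations_iff (hμ i).ne' (hν i).ne' (hημ i).ne'
    (hc i) (hd i)

theorem stmt16_general (u v : ℕ)
    (Λ μ ν γ δ η : Fin u → ℝ)
    (hΛ : ∀ i, 0 < Λ i) (hμ : ∀ i, 0 < μ i) (hν : ∀ i, 0 < ν i) (hγ : ∀ i, 0 < γ i)
    (hδ : ∀ i, 0 ≤ δ i) (hη : ∀ i, 0 ≤ η i)
    (B : Fin v → ℝ) (hB : ∀ j, 0 < B j)
    (M P : Matrix (Fin u) (Fin v) ℝ)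
    (hM : ∀ i j, 0 ≤ M i j) (hP : ∀ i j, 0 ≤ P i j)
    (Sstar : Fin u → ℝ) (hSstar : ∀ i, Sstar i = Λ i / μ i)
    (hirr : ∀ i j : Fin u, ∃ n : ℕ, 1 ≤ n ∧ 0 < ((M * Pᵀ) ^ n) i j)
    (hR0 : 1 < specRad (Matrix.diagonal Sstar * M * Matrix.diagonal B * Pᵀ *
      Matrix.diagonal ν * Matrix.diagonal (fun i => ((μ i + ν i) * (μ i + γ i + δ i))⁻¹))) :
    ∃! x : (Fin u → ℝ) × (Fin u → ℝ) × (Fin u → ℝ) × (Fin u → ℝ),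
      (∀ i, 0 < x.2.2.1 i) ∧
      0 = Λ - (Matrix.diagonal x.1 * M * Matrix.diagonal B * Pᵀ) *ᵥ x.2.2.1 -
          Matrix.diagonal μ *ᵥ x.1 + Matrix.diagonal η *ᵥ x.2.2.2 ∧
      0 = (Matrix.diagonal x.1 * M * Matrix.diagonal B * Pᵀ) *ᵥ x.2.2.1 -
          Matrix.diagonal (fun i => ν i + μ i) *ᵥ x.2.1 ∧
      0 = Matrix.diagonal ν *ᵥ x.2.1 -
          Matrix.diagonal (fun i => γ i + μ i + δ i) *ᵥ x.2.2.1 ∧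
      0 = Matrix.diagonal γ *ᵥ x.2.2.1 -
          Matrix.diagonal (fun i => η i + μ i) *ᵥ x.2.2.2 := by
  set F := M * diagonal B * Pᵀ
  set c : Fin u → ℝ := fun i => (μ i + ν i) * (μ i + γ i + δ i) / ν i
  set d : Fin u → ℝ := fun i => c i - η i * γ i / (η i + μ i) with hd_def
  have hημ : ∀ i, 0 < η i + μ i := fun i => by linarith [hη i, hμ i]
  have hc : ∀ i, c i * ν i = (μ i + ν i) * (μ i + γ i + δ i) :=
    fun i => div_mul_cancel₀ _ (hν i).ne'
  have hd : ∀ i, d i * (η i + μ i) = c i * (η i + μ i) - η i * γ i :=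
    fun i => by rw [hd_def, sub_mul, div_mul_cancel₀ _ (hημ i).ne']
  obtain ⟨hc_pos, hd_pos⟩ := forall_and.1 fun i =>
    equilibrium_coefficients_pos (hμ i) (hν i) (hγ i).le (hδ i) (hη i) (hc i) (hd i)
  have hm_pos : ∀ i, 0 < (μ * c) i := fun i => mul_pos (hμ i) (hc_pos i)
  have hMP : ∀ i j, 0 ≤ (M * Pᵀ) i j := fun i j => by
    simpa only [mul_apply, transpose_apply] using
      Finset.sum_nonneg fun k _ => mul_nonneg (hM i k) (hP j k)
  have hF : F.IsIrreducible :=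
    ((isIrreducible_iff_exists_pow_pos hMP).2 hirr).mul_diagonal_mul hM (fun k j => hP j k) hB
  obtain ⟨s, hs, x, hx, hsub⟩ := hF.exists_pos_le_of_one_lt_specRad (a := Sstar)
    (b := fun i => ν i * ((μ i + ν i) * (μ i + γ i + δ i))⁻¹)
    (fun i => by rw [hSstar]; exact div_pos (hΛ i) (hμ i))
    (fun i => mul_pos (hν i) (inv_pos.2 (by nlinarith [hμ i, hν i, hγ i, hδ i])))
    (by simpa only [F, Matrix.mul_assoc, diagonal_mul_diagonal] using hR0)
  obtain ⟨I, ⟨hI, hfix⟩, huniq⟩ := saturatingMap.existsUnique_pos_isFixedPt hF hΛ hm_pos hd_pos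
    hx hs fun i => (hsub i).trans_eq (by rw [hSstar i, Pi.mul_apply]; simp only [c]; field_simp)
  refine ⟨((Λ - d * I) / μ, (γ + μ + δ) * I / ν, I, γ * I / (η + μ)), ⟨hI, ?_⟩, ?_⟩
  · exact (equilibrium_iff hμ hν hημ hc hd).2 ⟨(saturatingMap.isFixedPt_iff hF.nonneg hm_pos
      (fun i => (hd_pos i).le) fun i => (hI i).le).1 hfix, rfl, rfl, rfl⟩
  rintro ⟨S, E, J, R⟩ ⟨hJ, heq⟩
  dsimp only at hJ heq
  obtain ⟨hJfix, rfl, rfl, rfl⟩ := (equilibrium_iff hμ hν hημ hc hd).1 heq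
  obtain rfl := huniq J ⟨hJ, (saturatingMap.isFixedPt_iff hF.nonneg hm_pos
      (fun i => (hd_pos i).le) fun i => (hJ i).le).2 hJfix⟩
  rfl

/-- if `B > 0`, `M·Pᵀ` is irreducible, and
`R0^DD = ρ(diag(S*)·M·diag(B)·Pᵀ·diag(ν)·diag((μ+ν)∘(μ+γ+δ))⁻¹) > 1`, then the
density-dependent model has a unique endemic equilibrium. -/
theorem stmt16 (u v : ℕ) (hu : 1 ≤ u) (hv : 1 ≤ v)
    (Λ μ ν γ δ η : Fin u → ℝ)
    (hΛ : ∀ i, 0 < Λ i) (hμ : ∀ i, 0 < μ i) (hν : ∀ i, 0 < ν i) (hγ : ∀ i, 0 < γ i)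
    (hδ : ∀ i, 0 ≤ δ i) (hη : ∀ i, 0 ≤ η i)
    (B : Fin v → ℝ) (hB : ∀ j, 0 < B j)
    (M P : Matrix (Fin u) (Fin v) ℝ)
    (hM : ∀ i j, 0 ≤ M i j) (hP : ∀ i j, 0 ≤ P i j)
    (Sstar : Fin u → ℝ) (hSstar : ∀ i, Sstar i = Λ i / μ i)
    (hirr : ∀ i j : Fin u, ∃ n : ℕ, 1 ≤ n ∧ 0 < ((M * Pᵀ) ^ n) i j)
    (hR0 : 1 < specRad (Matrix.diagonal Sstar * M * Matrix.diagonal B * Pᵀ *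
      Matrix.diagonal ν * Matrix.diagonal (fun i => ((μ i + ν i) * (μ i + γ i + δ i))⁻¹))) :
    ∃! x : (Fin u → ℝ) × (Fin u → ℝ) × (Fin u → ℝ) × (Fin u → ℝ),
      (∀ i, 0 < x.2.2.1 i) ∧
      0 = Λ - (Matrix.diagonal x.1 * M * Matrix.diagonal B * Pᵀ) *ᵥ x.2.2.1 -
          Matrix.diagonal μ *ᵥ x.1 + Matrix.diagonal η *ᵥ x.2.2.2 ∧
      0 = (Matrix.diagonal x.1 * M * Matrix.diagonal B * Pᵀ) *ᵥ x.2.2.1 -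
          Matrix.diagonal (fun i => ν i + μ i) *ᵥ x.2.1 ∧
      0 = Matrix.diagonal ν *ᵥ x.2.1 -
          Matrix.diagonal (fun i => γ i + μ i + δ i) *ᵥ x.2.2.1 ∧
      0 = Matrix.diagonal γ *ᵥ x.2.2.1 -
          Matrix.diagonal (fun i => η i + μ i) *ᵥ x.2.2.2 :=
  stmt16_general u v Λ μ ν γ δ η hΛ hμ hν hγ hδ hη B hB M P hM hP Sstar hSstar hirr hR0
end
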